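/- arXiv:2401.04819 — 8 statements merged into one kernel-verified Lean document; each statement's English description precedes it below -/
import Mathlib

section
/- Let X be a closed subspace of a Banach space Y whose dual is ℓ¹ with standard basis {e_n*}. Then every extreme point f* of the closed unit ball of X* is of the form f* = δ·(e_k*|_X) for some k ∈ ℕ and some δ ∈ {−1, 1}. -/
/-!
Restriction `Y* → X*` is weak*-continuous and, by Hahn–Banach, maps the dual unit ball of `Y`
onto that of `X`. The dual unit ball of `Y` is weak*-compact (Banach–Alaoglu), so by the
Krein–Milman lemma every extreme point of the image lifts to an extreme point of the ball itself.
Through the isometry `Y* ≅ ℓ¹` the latter is an extreme point of the unit ball of `ℓ¹`, which is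
`±eₖ`: a point `x` of norm one with `x i ≠ 0` is a convex combination of `sign (x i) • eᵢ` and a
point of the ball vanishing at `i`.
-/

open Set Metric

lemma LinearEquiv.mem_extremePoints_preimage_iff {𝕜 E F : Type*} [Ring 𝕜] [PartialOrder 𝕜]
    [IsOrderedRing 𝕜] [AddCommGroup E] [Module 𝕜 E] [AddCommGroup F] [Module 𝕜 F]
    (e : E ≃ₗ[𝕜] F) {s : Set F} {x : E} :
    x ∈ extremePoints 𝕜 (e ⁻¹' s) ↔ e x ∈ extremePoints 𝕜 s := by
  rw [← e.image_symm_eq_preimage, ← image_extremePoints, e.image_symm_eq_preimage, mem_preimage]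

lemma LinearIsometryEquiv.mem_extremePoints_closedBall_iff {E F : Type*}
    [NormedAddCommGroup E] [NormedSpace ℝ E] [NormedAddCommGroup F] [NormedSpace ℝ F]
    (e : E ≃ₗᵢ[ℝ] F) {x : E} {r : ℝ} :
    e x ∈ extremePoints ℝ (closedBall 0 r) ↔ x ∈ extremePoints ℝ (closedBall 0 r) := by
  simpa using (e.toLinearEquiv.mem_extremePoints_preimage_iff (s := closedBall 0 r)).symm

namespace WeakDual

variable {𝕜 E F : Type*} [RCLike 𝕜] [NormedAddCommGroup E] [NormedSpace 𝕜 E]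
  [NormedAddCommGroup F] [NormedSpace 𝕜 F]

noncomputable def dualMap (φ : E →L[𝕜] F) : WeakDual 𝕜 F →L[𝕜] WeakDual 𝕜 E where
  toFun g := StrongDual.toWeakDual ((toStrongDual g).comp φ)
  map_add' _ _ := rfl
  map_smul' _ _ := rfl
  cont := continuous_of_continuous_eval fun x => eval_continuous (φ x)

lemma mem_extremePoints_preimage_toStrongDual_iff {s : Set (StrongDual 𝕜 E)} {x : WeakDual 𝕜 E} :
    x ∈ extremePoints ℝ (toStrongDual ⁻¹' s) ↔ toStrongDual x ∈ extremePoints ℝ s :=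
  Iff.rfl

lemma image_dualMap_subtypeL_closedBall (p : Submodule 𝕜 E) (r : ℝ) :
    dualMap p.subtypeL '' (toStrongDual ⁻¹' closedBall 0 r) = toStrongDual ⁻¹' closedBall 0 r := by
  ext g
  simp only [mem_image, mem_preimage, mem_closedBall_zero_iff]
  constructor
  · rintro ⟨G, hG, rfl⟩
    calc ‖(toStrongDual G).comp p.subtypeL‖ ≤ ‖toStrongDual G‖ * ‖p.subtypeL‖ :=
          (toStrongDual G).opNorm_comp_le _
      _ ≤ ‖toStrongDual G‖ := mul_le_of_le_one_right (norm_nonneg _) p.norm_subtypeL_le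
      _ ≤ r := hG
  · intro hg
    obtain ⟨G, hGg, hGnorm⟩ := exists_extension_norm_eq p (toStrongDual g)
    exact ⟨StrongDual.toWeakDual G, by simpa [hGnorm], DFunLike.ext _ _ hGg⟩

end WeakDual

open WeakDual in
theorem exists_extension_mem_extremePoints_closedBall {E : Type*} [NormedAddCommGroup E]
    [NormedSpace ℝ E] (p : Submodule ℝ E) {r : ℝ} {f : StrongDual ℝ p}
    (hf : f ∈ extremePoints ℝ (closedBall 0 r)) :
    ∃ g ∈ extremePoints ℝ (closedBall (0 : StrongDual ℝ E) r), g.comp p.subtypeL = f := by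
  have hf' : StrongDual.toWeakDual f ∈
      extremePoints ℝ (dualMap p.subtypeL '' (toStrongDual ⁻¹' closedBall 0 r)) := by
    rw [image_dualMap_subtypeL_closedBall]
    exact mem_extremePoints_preimage_toStrongDual_iff.2 hf
  have : LocallyConvexSpace ℝ (WeakDual ℝ E) := WeakBilin.locallyConvexSpace
  obtain ⟨z, hz, hzf⟩ := surjOn_extremePoints_image (dualMap p.subtypeL).toContinuousAffineMap
    (isCompact_closedBall 0 r) hf'
  exact ⟨toStrongDual z, mem_extremePoints_preimage_toStrongDual_iff.1 hz,
    congrArg toStrongDual hzf⟩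

namespace lp

variable {ι : Type*}

instance [Nonempty ι] : Nontrivial (lp (fun _ : ι => ℝ) 1) := by
  classical
  inhabit ι
  refine ⟨lp.single 1 default 1, 0, fun h => ?_⟩
  simpa using congrArg (fun x : lp (fun _ : ι => ℝ) 1 => x default) h

variable [DecidableEq ι]

lemma norm_eq_abs_add_norm_sub_single (x : lp (fun _ : ι => ℝ) 1) (i : ι) :
    ‖x‖ = |x i| + ‖x - lp.single 1 i (x i)‖ := by
  have := lp.norm_compl_sum_single (E := fun _ : ι => ℝ) (by simp) x {i}
  simp only [Finset.sum_singleton, ENNReal.toReal_one, Real.rpow_one, Real.norm_eq_abs] at this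
  linarith

theorem exists_eq_smul_single_of_mem_extremePoints_closedBall [Nonempty ι]
    {x : lp (fun _ : ι => ℝ) 1} (hx : x ∈ extremePoints ℝ (closedBall 0 1)) :
    ∃ (k : ι) (δ : ℝ), (δ = 1 ∨ δ = -1) ∧ x = δ • lp.single 1 k 1 := by
  have hx1 : ‖x‖ = 1 := by simpa using extremePoints_closedBall_subset_sphere hx
  obtain ⟨i, hi⟩ : ∃ i, x i ≠ 0 := by
    by_contra! h
    simp [show x = 0 from lp.ext (funext h)] at hx1
  set c := x i
  set s := x - lp.single 1 i c
  set δ := c / |c|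
  have hδ : |δ| = 1 := by rw [abs_div, abs_abs, div_self (abs_ne_zero.2 hi)]
  have hs : ‖s‖ = 1 - |c| := by linarith [norm_eq_abs_add_norm_sub_single x i]
  -- `x = |c| • a + (1 - |c|) • b`, and `b` cannot be `x` because `b i = 0`
  set a : lp (fun _ : ι => ℝ) 1 := δ • lp.single 1 i 1
  set b := (1 - |c|)⁻¹ • s
  have ha : a ∈ closedBall 0 1 := by simp [a, norm_smul, lp.norm_single, hδ]
  have hb : b ∈ closedBall 0 1 := by
    rw [mem_closedBall_zero_iff, norm_smul, norm_inv, hs, Real.norm_of_nonneg (hs ▸ norm_nonneg s)]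
    exact inv_mul_le_one_of_le₀ le_rfl (hs ▸ norm_nonneg s)
  have hca : |c| • a = lp.single 1 i c := by
    rw [smul_smul, mul_div_cancel₀ c (abs_ne_zero.2 hi), ← lp.single_smul, smul_eq_mul, mul_one]
  have hsb : (1 - |c|) • b = s := by
    rcases eq_or_ne (1 - |c|) 0 with h | h
    · rw [h, zero_smul, eq_comm, ← norm_eq_zero, hs, h]
    · exact smul_inv_smul₀ h s
  have hseg : x ∈ segment ℝ a b :=
    ⟨|c|, 1 - |c|, abs_nonneg c, hs ▸ norm_nonneg s, by ring, by rw [hca, hsb, add_sub_cancel]⟩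
  rcases (mem_extremePoints_iff_forall_segment.1 hx).2 a ha b hb hseg with h | h
  · exact ⟨i, δ, (abs_eq zero_le_one).1 hδ, h.symm⟩
  · have hbi : b i = (1 - |c|)⁻¹ * (c - (lp.single 1 i c : lp (fun _ : ι => ℝ) 1) i) := rfl
    rw [lp.single_apply_self, sub_self, mul_zero, h] at hbi
    exact absurd hbi hi

end lp

theorem stmt1_general (Y : Type*) [NormedAddCommGroup Y] [NormedSpace ℝ Y]
    (T : lp (fun _ : ℕ => ℝ) 1 ≃ₗᵢ[ℝ] (Y →L[ℝ] ℝ))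
    (X : Submodule ℝ Y)
    (f : X →L[ℝ] ℝ)
    (hf : f ∈ Set.extremePoints ℝ (Metric.closedBall (0 : X →L[ℝ] ℝ) 1)) :
    ∃ (k : ℕ) (δ : ℝ), (δ = 1 ∨ δ = -1) ∧
      f = δ • (T (lp.single 1 k 1)).comp X.subtypeL := by
  obtain ⟨g, hg, rfl⟩ := exists_extension_mem_extremePoints_closedBall X hf
  obtain ⟨k, δ, hδ, hk⟩ := lp.exists_eq_smul_single_of_mem_extremePoints_closedBall
    (T.symm.mem_extremePoints_closedBall_iff.2 hg)
  refine ⟨k, δ, hδ, ?_⟩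
  rw [← T.apply_symm_apply g, hk, map_smul, ContinuousLinearMap.smul_comp]

/-- if `X` is a closed subspace of a Banach space `Y` whose dual is
(isometric to) `ℓ¹` with standard basis `e_n* = T (lp.single 1 n 1)`, then every
extreme point `f` of the closed unit ball of `X*` has the form `f = δ • (e_k*|_X)`
for some `k ∈ ℕ` and `δ ∈ {−1, 1}`. -/
theorem stmt1 (Y : Type*) [NormedAddCommGroup Y] [NormedSpace ℝ Y] [CompleteSpace Y]
    (T : lp (fun _ : ℕ => ℝ) 1 ≃ₗᵢ[ℝ] (Y →L[ℝ] ℝ))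
    (X : Submodule ℝ Y) (hX : IsClosed (X : Set Y))
    (f : X →L[ℝ] ℝ)
    (hf : f ∈ Set.extremePoints ℝ (Metric.closedBall (0 : X →L[ℝ] ℝ) 1)) :
    ∃ (k : ℕ) (δ : ℝ), (δ = 1 ∨ δ = -1) ∧
      f = δ • (T (lp.single 1 k 1)).comp X.subtypeL :=
  stmt1_general Y T X f hf
end

section
/- Let α ∈ ℓ¹ with 0 < ‖α‖₁ ≤ 1. For every real number r with |α(1)| ≤ r < ‖α‖₁, the space W_{r·e₁*} embeds isometrically into W_α. Explicitly, assuming α(1) ≥ |α(n+1)| for all n ≥ 1, choosing K > 1 with Σ_{j=1}^{K−1}|α(j)| ≤ r < Σ_{j=1}^K |α(j)|, s ∈ [0,1) with r = s|α(1)| + Σ_{j=2}^K |α(j)|, and N > K with Σ_{j=N}^∞ |α(j)| ≤ (1−s)|α(1)|, the map T defined by (Tw)(1) = s·w(1) − Σ_{j=N}^∞ (α(j)/α(1))·w(j−N+2), (Tw)(i) = sgn(α(i))·w(1) for 2 ≤ i ≤ K, (Tw)(i) = 0 for K+1 ≤ i ≤ N−1, and (Tw)(i) = w(i−N+2) for i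 ≥ N, is a linear isometry from W_{r·e₁*} into W_α. -/
open Filter Topology

noncomputable section

/-- `x` belongs to the hyperplane `W_α` of the space `c` of convergent real sequences:
`x` converges and its limit equals `∑' i, α i * x i` (sequences are 0-indexed). -/
def MemW (α x : ℕ → ℝ) : Prop :=
  (∃ l : ℝ, Tendsto x atTop (𝓝 l)) ∧ Tendsto x atTop (𝓝 (∑' i, α i * x i))

/-- The sup norm of a real sequence. -/
def supNorm (x : ℕ → ℝ) : ℝ := ⨆ i, |x i|

/-- The element `r·e₁* = (r,0,0,…)` of `ℓ¹`. -/
def rSeq (r : ℝ) : ℕ → ℝ := fun i => if i = 0 then r else 0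

lemma mul_sign_eq_abs (x : ℝ) : x * Real.sign x = |x| := by
  rcases lt_trichotomy x 0 with h | h | h
  · rw [Real.sign_of_neg h, abs_of_neg h]; ring
  · simp [h]
  · rw [Real.sign_of_pos h, abs_of_pos h]; ring

lemma bdd_of_conv {w : ℕ → ℝ} (h : ∃ l : ℝ, Tendsto w atTop (𝓝 l)) :
    ∃ C : ℝ, 0 ≤ C ∧ ∀ i, |w i| ≤ C := by
  obtain ⟨l, hl⟩ := h
  obtain ⟨C, hC⟩ := (hl.abs).bddAbove_range
  exact ⟨C, le_trans (abs_nonneg (w 0)) (hC (Set.mem_range_self 0)),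
    fun i => hC (Set.mem_range_self i)⟩

/-- explicit isometric embedding of `W_{r·e₁*}` into `W_α`
(`0 < ‖α‖₁ ≤ 1`, `|α(1)| ≤ r < ‖α‖₁`).  Indices are shifted by one: the paper's
`α(i)`, `x(i)` are `α (i-1)`, `x (i-1)` here. -/
theorem stmt3 (α : ℕ → ℝ) (hsum : Summable fun i => |α i|)
    (hpos : 0 < ∑' i, |α i|) (hle : ∑' i, |α i| ≤ 1)
    (hdom : ∀ n, |α (n + 1)| ≤ α 0)
    (r : ℝ) (hr1 : |α 0| ≤ r) (hr2 : r < ∑' i, |α i|)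
    (K : ℕ) (hK : 2 ≤ K)
    (hK1 : ∑ j ∈ Finset.range (K - 1), |α j| ≤ r)
    (hK2 : r < ∑ j ∈ Finset.range K, |α j|)
    (s : ℝ) (hs0 : 0 ≤ s) (hs1 : s < 1)
    (hsr : r = s * |α 0| + ∑ j ∈ Finset.Ico 1 K, |α j|)
    (N : ℕ) (hNK : K < N)
    (hN : ∑' t, |α (N - 1 + t)| ≤ (1 - s) * |α 0|)
    (T : (ℕ → ℝ) → (ℕ → ℝ))
    (hT : ∀ w m, T w m =
      if m = 0 then s * w 0 - ∑' t, (α (N - 1 + t) / α 0) * w (t + 1)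
      else if m < K then Real.sign (α m) * w 0
      else if m + 2 ≤ N then 0
      else w (m + 2 - N)) :
    (∀ w, MemW (rSeq r) w → MemW α (T w) ∧ supNorm (T w) = supNorm w) ∧
    (∀ w v, MemW (rSeq r) w → MemW (rSeq r) v → T (w + v) = T w + T v) ∧
    (∀ (a : ℝ) (w : ℕ → ℝ), MemW (rSeq r) w → T (a • w) = a • T w) := by
  -- positivity of α 0
  have hα0 : 0 < α 0 := by
    rcases lt_or_eq_of_le ((abs_nonneg (α 1)).trans (hdom 0)) with h | h
    · exact h
    · exfalso
      have hz : ∀ i, |α i| = 0 := by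
        intro i
        cases i with
        | zero => simp [← h]
        | succ n => exact le_antisymm (h ▸ hdom n) (abs_nonneg _)
      rw [tsum_congr hz, tsum_zero] at hpos
      exact lt_irrefl 0 hpos
  have habs0 : |α 0| = α 0 := abs_of_pos hα0
  have hαK : α (K - 1) ≠ 0 := by
    intro h
    have hKe : K = (K - 1) + 1 := by omega
    rw [hKe, Finset.sum_range_succ, h, abs_zero, add_zero] at hK2
    exact absurd hK1 (not_le.2 hK2)
  have hsgnK : |Real.sign (α (K - 1))| = 1 := by
    rcases Real.sign_apply_eq_of_ne_zero _ hαK with h | h <;> rw [h] <;> norm_num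
  -- summability of the shifted sequence
  have hsum_shift : Summable fun t => |α (N - 1 + t)| := by
    have h := (summable_nat_add_iff (f := fun i => |α i|) (N - 1)).2 hsum
    exact h.congr fun t => by rw [add_comm]
  -- summability of the series in T w 0, for bounded w
  have hsummW : ∀ (w : ℕ → ℝ) (C : ℝ), (∀ i, |w i| ≤ C) →
      Summable fun t => (α (N - 1 + t) / α 0) * w (t + 1) := by
    intro w C hC
    have hC0 : 0 ≤ C := le_trans (abs_nonneg _) (hC 0)
    apply Summable.of_abs
    apply Summable.of_nonneg_of_le (fun t => abs_nonneg _) (fun t => ?_)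
      (hsum_shift.mul_right (C / α 0))
    calc |α (N - 1 + t) / α 0 * w (t + 1)| = |α (N - 1 + t)| * |w (t + 1)| / α 0 := by
          rw [abs_mul, abs_div, habs0]; ring
      _ ≤ |α (N - 1 + t)| * C / α 0 := by gcongr; exact hC _
      _ = |α (N - 1 + t)| * (C / α 0) := by ring
  -- bound for the series in T w 0
  have htsum_bound : ∀ (w : ℕ → ℝ) (C : ℝ), 0 ≤ C → (∀ i, |w i| ≤ C) →
      |∑' t, (α (N - 1 + t) / α 0) * w (t + 1)| ≤ (1 - s) * C := by
    intro w C hC0 hC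
    have hsw := hsummW w C hC
    have h1 : |∑' t, (α (N - 1 + t) / α 0) * w (t + 1)|
        ≤ ∑' t, |(α (N - 1 + t) / α 0) * w (t + 1)| := by
      simpa only [Real.norm_eq_abs] using
        norm_tsum_le_tsum_norm (f := fun t => (α (N - 1 + t) / α 0) * w (t + 1))
          (by simpa only [Real.norm_eq_abs] using hsw.abs)
    have h2 : ∑' t, |(α (N - 1 + t) / α 0) * w (t + 1)|
        ≤ ∑' t, |α (N - 1 + t)| * (C / α 0) := by
      apply Summable.tsum_le_tsum _ hsw.abs (hsum_shift.mul_right _)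
      intro t
      calc |α (N - 1 + t) / α 0 * w (t + 1)| = |α (N - 1 + t)| * |w (t + 1)| / α 0 := by
            rw [abs_mul, abs_div, habs0]; ring
        _ ≤ |α (N - 1 + t)| * C / α 0 := by gcongr; exact hC _
        _ = |α (N - 1 + t)| * (C / α 0) := by ring
    have h3 : ∑' t, |α (N - 1 + t)| * (C / α 0) = (∑' t, |α (N - 1 + t)|) * (C / α 0) :=
      tsum_mul_right
    have h4 : (∑' t, |α (N - 1 + t)|) * (C / α 0) ≤ ((1 - s) * α 0) * (C / α 0) := by
      apply mul_le_mul_of_nonneg_right _ (div_nonneg hC0 hα0.le)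
      rw [habs0] at hN; exact hN
    have h5 : ((1 - s) * α 0) * (C / α 0) = (1 - s) * C := by
      field_simp
    linarith
  -- the limit of w and the tsum identity for rSeq
  have hrlim : ∀ w : ℕ → ℝ, MemW (rSeq r) w → Tendsto w atTop (𝓝 (r * w 0)) := by
    intro w hw
    have : ∑' i, rSeq r i * w i = r * w 0 := by
      rw [tsum_eq_single 0 (fun b hb => by simp [rSeq, hb])]
      simp [rSeq]
    exact this ▸ hw.2
  -- key computation : the tsum of α i * T w i
  have hmain : ∀ w : ℕ → ℝ, MemW (rSeq r) w →
      (Summable fun i => α i * T w i) ∧ (∑' i, α i * T w i = r * w 0) := by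
    intro w hw
    obtain ⟨C, hC0, hC⟩ := bdd_of_conv hw.1
    have hsw := hsummW w C hC
    -- a crude bound on T w
    have hTb : ∀ m, |T w m| ≤ (1 + s) * C := by
      intro m
      rw [hT]
      split_ifs with h1 h2 h3
      · calc |s * w 0 - ∑' t, (α (N - 1 + t) / α 0) * w (t + 1)|
            ≤ |s * w 0| + |∑' t, (α (N - 1 + t) / α 0) * w (t + 1)| := abs_sub _ _
          _ ≤ s * C + (1 - s) * C := by
              have := htsum_bound w C hC0 hC
              have h0 : |s * w 0| ≤ s * C := by
                rw [abs_mul, abs_of_nonneg hs0]; exact mul_le_mul_of_nonneg_left (hC 0) hs0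
              linarith
          _ ≤ (1 + s) * C := by nlinarith
      · calc |Real.sign (α m) * w 0| = |Real.sign (α m)| * |w 0| := abs_mul _ _
          _ ≤ 1 * C := by
              apply mul_le_mul _ (hC 0) (abs_nonneg _) zero_le_one
              rcases Real.sign_apply_eq (α m) with h | h | h <;> rw [h] <;> norm_num
          _ ≤ (1 + s) * C := by nlinarith
      · simpa using by nlinarith
      · calc |w (m + 2 - N)| ≤ C := hC _
          _ ≤ (1 + s) * C := by nlinarith
    have hTsummable : Summable fun i => α i * T w i := by
      apply Summable.of_abs
      apply Summable.of_nonneg_of_le (fun t => abs_nonneg _) (fun i => ?_)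
        (hsum.mul_right ((1 + s) * C))
      rw [abs_mul]
      exact mul_le_mul_of_nonneg_left (hTb i) (abs_nonneg _)
    refine ⟨hTsummable, ?_⟩
    have hsplit := (Summable.sum_add_tsum_nat_add (f := fun i => α i * T w i) (N - 1) hTsummable).symm
    -- the tail
    have htail : ∀ t : ℕ, α (t + (N - 1)) * T w (t + (N - 1)) = α (N - 1 + t) * w (t + 1) := by
      intro t
      rw [hT]
      rw [if_neg (by omega), if_neg (by omega), if_neg (by omega)]
      have h1 : t + (N - 1) + 2 - N = t + 1 := by omega
      have h2 : t + (N - 1) = N - 1 + t := by omega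
      rw [h1, h2]
    -- the head
    have hhead : ∑ i ∈ Finset.range (N - 1), α i * T w i
        = (s * α 0 + ∑ j ∈ Finset.Ico 1 K, |α j|) * w 0
          - ∑' t, α (N - 1 + t) * w (t + 1) := by
      rw [Finset.range_eq_Ico, Finset.sum_eq_sum_Ico_succ_bot (by omega : 0 < N - 1)]
      rw [← Finset.sum_Ico_consecutive _ (by omega : 1 ≤ K) (by omega : K ≤ N - 1)]
      have hz : ∑ i ∈ Finset.Ico K (N - 1), α i * T w i = 0 := by
        apply Finset.sum_eq_zero
        intro i hi
        rw [Finset.mem_Ico] at hi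
        rw [hT, if_neg (by omega), if_neg (by omega), if_pos (by omega), mul_zero]
      have hmid : ∑ i ∈ Finset.Ico 1 K, α i * T w i
          = (∑ j ∈ Finset.Ico 1 K, |α j|) * w 0 := by
        rw [Finset.sum_mul]
        apply Finset.sum_congr rfl
        intro i hi
        rw [Finset.mem_Ico] at hi
        rw [hT, if_neg (by omega), if_pos hi.2, ← mul_assoc, mul_sign_eq_abs]
      have h0 : α 0 * T w 0 = s * α 0 * w 0 - ∑' t, α (N - 1 + t) * w (t + 1) := by
        rw [hT, if_pos rfl, mul_sub, ← tsum_mul_left]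
        congr 1
        · ring
        · apply tsum_congr
          intro t
          field_simp
      rw [hz, hmid, h0]
      ring
    rw [hsplit, tsum_congr htail, hhead]
    have : r = s * α 0 + ∑ j ∈ Finset.Ico 1 K, |α j| := by rw [hsr, habs0]
    rw [← this]
    ring
  -- limit of T w
  have hTlim : ∀ w : ℕ → ℝ, MemW (rSeq r) w → Tendsto (T w) atTop (𝓝 (r * w 0)) := by
    intro w hw
    have hwl := hrlim w hw
    have hshift : Tendsto (fun m => w (m + 2 - N)) atTop (𝓝 (r * w 0)) :=
      hwl.comp (tendsto_atTop_atTop.2 fun b => ⟨b + N, fun a ha => by omega⟩)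
    apply hshift.congr'
    filter_upwards [eventually_ge_atTop (N - 1)] with m hm
    rw [hT, if_neg (by omega), if_neg (by omega), if_neg (by omega)]
  refine ⟨?_, ?_, ?_⟩
  · -- main bullet : membership and isometry
    intro w hw
    obtain ⟨C, hC0, hC⟩ := bdd_of_conv hw.1
    have hbw : BddAbove (Set.range fun i => |w i|) := ⟨C, by rintro _ ⟨i, rfl⟩; exact hC i⟩
    set M := supNorm w with hM
    have hwM : ∀ i, |w i| ≤ M := fun i => le_ciSup hbw i
    have hM0 : 0 ≤ M := le_trans (abs_nonneg _) (hwM 0)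
    have hTb : ∀ m, |T w m| ≤ M := by
      intro m
      rw [hT]
      split_ifs with h1 h2 h3
      · calc |s * w 0 - ∑' t, (α (N - 1 + t) / α 0) * w (t + 1)|
            ≤ |s * w 0| + |∑' t, (α (N - 1 + t) / α 0) * w (t + 1)| := abs_sub _ _
          _ ≤ s * M + (1 - s) * M := by
              have := htsum_bound w M hM0 hwM
              have h0 : |s * w 0| ≤ s * M := by
                rw [abs_mul, abs_of_nonneg hs0]
                exact mul_le_mul_of_nonneg_left (hwM 0) hs0
              linarith
          _ = M := by ring
      · calc |Real.sign (α m) * w 0| = |Real.sign (α m)| * |w 0| := abs_mul _ _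
          _ ≤ 1 * M := by
              apply mul_le_mul _ (hwM 0) (abs_nonneg _) zero_le_one
              rcases Real.sign_apply_eq (α m) with h | h | h <;> rw [h] <;> norm_num
          _ = M := one_mul M
      · simpa using hM0
      · exact hwM _
    have hbT : BddAbove (Set.range fun m => |T w m|) := ⟨M, by rintro _ ⟨m, rfl⟩; exact hTb m⟩
    constructor
    · obtain ⟨hTsummable, hTsum⟩ := hmain w hw
      exact ⟨⟨r * w 0, hTlim w hw⟩, by rw [hTsum]; exact hTlim w hw⟩
    · apply le_antisymm
      · exact Real.iSup_le hTb hM0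
      · apply Real.iSup_le _ (le_trans (abs_nonneg _) (le_ciSup hbT 0))
        intro j
        cases j with
        | zero =>
          have hTK : |T w (K - 1)| = |w 0| := by
            rw [hT, if_neg (by omega), if_pos (by omega), abs_mul, hsgnK, one_mul]
          exact hTK ▸ le_ciSup hbT (K - 1)
        | succ n =>
          have hTn : |T w (N - 1 + n)| = |w (n + 1)| := by
            rw [hT, if_neg (by omega), if_neg (by omega), if_neg (by omega)]
            congr 2
            omega
          exact hTn ▸ le_ciSup hbT (N - 1 + n)
  · -- additivity
    intro w v hw hv
    obtain ⟨C, hC0, hC⟩ := bdd_of_conv hw.1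
    obtain ⟨D, hD0, hD⟩ := bdd_of_conv hv.1
    funext m
    rw [Pi.add_apply, hT, hT, hT]
    by_cases h1 : m = 0
    · rw [if_pos h1, if_pos h1, if_pos h1]
      have heq : ∀ t : ℕ, (α (N - 1 + t) / α 0) * (w + v) (t + 1)
          = (α (N - 1 + t) / α 0) * w (t + 1) + (α (N - 1 + t) / α 0) * v (t + 1) := by
        intro t; rw [Pi.add_apply]; ring
      rw [tsum_congr heq, Summable.tsum_add (hsummW w C hC) (hsummW v D hD), Pi.add_apply]
      ring
    · rw [if_neg h1, if_neg h1, if_neg h1]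
      by_cases h2 : m < K
      · rw [if_pos h2, if_pos h2, if_pos h2, Pi.add_apply]; ring
      · rw [if_neg h2, if_neg h2, if_neg h2]
        by_cases h3 : m + 2 ≤ N
        · rw [if_pos h3, if_pos h3, if_pos h3]; ring
        · rw [if_neg h3, if_neg h3, if_neg h3, Pi.add_apply]
  · -- homogeneity
    intro a w hw
    funext m
    rw [Pi.smul_apply, smul_eq_mul, hT, hT]
    by_cases h1 : m = 0
    · rw [if_pos h1, if_pos h1]
      have heq : ∀ t : ℕ, (α (N - 1 + t) / α 0) * (a • w) (t + 1)
          = a * ((α (N - 1 + t) / α 0) * w (t + 1)) := by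
        intro t; rw [Pi.smul_apply, smul_eq_mul]; ring
      rw [tsum_congr heq, tsum_mul_left, Pi.smul_apply, smul_eq_mul]
      ring
    · rw [if_neg h1, if_neg h1]
      by_cases h2 : m < K
      · rw [if_pos h2, if_pos h2, Pi.smul_apply, smul_eq_mul]; ring
      · rw [if_neg h2, if_neg h2]
        by_cases h3 : m + 2 ≤ N
        · rw [if_pos h3, if_pos h3]; ring
        · rw [if_neg h3, if_neg h3, Pi.smul_apply, smul_eq_mul]
end
end

section
/- Let β ∈ ℓ¹ and r ∈ ℝ with ‖β‖₁ ≤ r. Then the map T : W_β → W_{r·e₁*} defined by T(x) = (x_∞/r, x(1), x(2), ...), where x_∞ = lim_n x(n), is a linear isometry from W_β into W_{r·e₁*} (assuming r > 0). -/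
open Filter Topology

noncomputable section

/-! The first entry of `T x` is `x_∞ / r`, and `|x_∞| = |∑ β i x i| ≤ ‖β‖₁ ‖x‖_∞ ≤ r ‖x‖_∞`, so
it never exceeds the sup norm of the remaining entries, which are those of `x`. Shifting `x`
does not change its limit, and pairing `T x` with `r·e₁*` gives back `r · x_∞ / r = x_∞`. -/

def prepend (a : ℝ) (x : ℕ → ℝ) : ℕ → ℝ := fun m => if m = 0 then a else x (m - 1)

lemma prepend_zero (a : ℝ) (x : ℕ → ℝ) : prepend a x 0 = a := rfl

lemma prepend_add (a b : ℝ) (x y : ℕ → ℝ) :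
    prepend (a + b) (x + y) = prepend a x + prepend b y := by
  funext m; cases m <;> rfl

lemma prepend_smul (c a : ℝ) (x : ℕ → ℝ) : prepend (c * a) (c • x) = c • prepend a x := by
  funext m; cases m <;> rfl

lemma Filter.Tendsto.prepend {x : ℕ → ℝ} {l : ℝ} (a : ℝ) (hx : Tendsto x atTop (𝓝 l)) :
    Tendsto (prepend a x) atTop (𝓝 l) :=
  (tendsto_add_atTop_iff_nat 1).mp hx

lemma supNorm_prepend {a : ℝ} {x : ℕ → ℝ} (hx : BddAbove (Set.range fun i => |x i|))
    (ha : |a| ≤ supNorm x) : supNorm (prepend a x) = supNorm x := by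
  have hle : ∀ m, |prepend a x m| ≤ supNorm x := by
    rintro (_ | i)
    · exact ha
    · exact le_ciSup hx i
  have hbdd : BddAbove (Set.range fun m => |prepend a x m|) := ⟨_, Set.forall_mem_range.2 hle⟩
  exact le_antisymm (ciSup_le hle) (ciSup_le fun i => le_ciSup hbdd (i + 1))

lemma tsum_rSeq_mul (r : ℝ) (y : ℕ → ℝ) : ∑' i, rSeq r i * y i = r * y 0 := by
  rw [tsum_eq_single 0 fun i hi => by simp [rSeq, hi]]
  simp [rSeq]

lemma memW_rSeq_prepend {r a : ℝ} {x : ℕ → ℝ} (hx : Tendsto x atTop (𝓝 (r * a))) :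
    MemW (rSeq r) (prepend a x) :=
  ⟨⟨_, hx.prepend a⟩, by rw [tsum_rSeq_mul, prepend_zero]; exact hx.prepend a⟩

section WeightedSum

variable {β x : ℕ → ℝ}

lemma norm_mul_le_of_abs_le {C : ℝ} (hC : ∀ i, |x i| ≤ C) (i : ℕ) :
    ‖β i * x i‖ ≤ |β i| * C := by
  rw [Real.norm_eq_abs, abs_mul]
  exact mul_le_mul_of_nonneg_left (hC i) (abs_nonneg _)

lemma summable_mul_of_tendsto (hβ : Summable fun i => |β i|) {l : ℝ}
    (hx : Tendsto x atTop (𝓝 l)) : Summable fun i => β i * x i := by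
  obtain ⟨C, hC⟩ := hx.abs.bddAbove_range
  exact .of_norm_bounded (hβ.mul_right C) (norm_mul_le_of_abs_le fun i => hC ⟨i, rfl⟩)

lemma abs_tsum_mul_le (hβ : Summable fun i => |β i|) {C : ℝ} (hC : ∀ i, |x i| ≤ C) :
    |∑' i, β i * x i| ≤ (∑' i, |β i|) * C :=
  tsum_of_norm_bounded (hβ.hasSum.mul_right C) (norm_mul_le_of_abs_le hC)

end WeightedSum

/-- for `β ∈ ℓ¹` and `r > 0` with `‖β‖₁ ≤ r`, the map
`T x = (x_∞ / r, x(1), x(2), …)` (with `x_∞ = lim x = ∑ β i * x i`) is a linear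
isometry from `W_β` into `W_{r·e₁*}`. -/
theorem stmt4 (β : ℕ → ℝ) (hsum : Summable fun i => |β i|)
    (r : ℝ) (hr : ∑' i, |β i| ≤ r) (hr0 : 0 < r)
    (T : (ℕ → ℝ) → (ℕ → ℝ))
    (hT : ∀ x m, T x m = if m = 0 then (∑' i, β i * x i) / r else x (m - 1)) :
    (∀ x, MemW β x → MemW (rSeq r) (T x) ∧ supNorm (T x) = supNorm x) ∧
    (∀ x y, MemW β x → MemW β y → T (x + y) = T x + T y) ∧
    (∀ (a : ℝ) (x : ℕ → ℝ), MemW β x → T (a • x) = a • T x) := by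
  have hTx : ∀ x, T x = prepend ((∑' i, β i * x i) / r) x := fun x => funext (hT x)
  refine ⟨fun x hx => ⟨?_, ?_⟩, fun x y hx hy => ?_, fun a x _ => ?_⟩
  · rw [hTx]
    exact memW_rSeq_prepend (by rw [mul_div_cancel₀ _ hr0.ne']; exact hx.2)
  · have hb := hx.2.abs.bddAbove_range
    have hle : ∀ i, |x i| ≤ supNorm x := fun i => le_ciSup hb i
    have hnorm : 0 ≤ supNorm x := (abs_nonneg _).trans (hle 0)
    rw [hTx, supNorm_prepend hb]
    rw [abs_div, abs_of_pos hr0, div_le_iff₀ hr0, mul_comm]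
    exact (abs_tsum_mul_le hsum hle).trans (mul_le_mul_of_nonneg_right hr hnorm)
  · simp only [hTx, Pi.add_apply, mul_add]
    rw [(summable_mul_of_tendsto hsum hx.2).tsum_add (summable_mul_of_tendsto hsum hy.2),
      add_div, prepend_add]
  · simp only [hTx, Pi.smul_apply, smul_eq_mul, mul_left_comm (β _) a]
    rw [tsum_mul_left, mul_div_assoc, ← prepend_smul]
end
end

section
/- Let α ∈ ℓ¹ with 0 < ‖α‖₁ < 1, set r = ‖α‖₁, and suppose the support of α is finite, say supp(α) = {1,...,n}. Then the map T : W_{r·e₁*} → W_α given by (Tx)(i) = sgn(α(i))·x(1) for i ∈ supp(α) and (Tx)(i) = x(i−n) for i ≥ n+1 is a linear isometry into W_α. -/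
open Filter Topology

noncomputable section

/-- if `0 < ‖α‖₁ < 1`, `r = ‖α‖₁` and `supp α = {1,…,n}` (here: indices
`0,…,n-1`), then `T x = (sgn(α(1))x(1), …, sgn(α(n))x(1), x(1), x(2), …)` is a linear
isometry from `W_{r·e₁*}` into `W_α`. -/
theorem stmt5 (α : ℕ → ℝ) (hsum : Summable fun i => |α i|)
    (hpos : 0 < ∑' i, |α i|) (hlt : ∑' i, |α i| < 1)
    (n : ℕ) (hsupp : ∀ i, α i ≠ 0 ↔ i < n)
    (r : ℝ) (hr : r = ∑' i, |α i|)
    (T : (ℕ → ℝ) → (ℕ → ℝ))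
    (hT : ∀ x m, T x m = if m < n then Real.sign (α m) * x 0 else x (m - n)) :
    (∀ x, MemW (rSeq r) x → MemW α (T x) ∧ supNorm (T x) = supNorm x) ∧
    (∀ x y, MemW (rSeq r) x → MemW (rSeq r) y → T (x + y) = T x + T y) ∧
    (∀ (a : ℝ) (x : ℕ → ℝ), MemW (rSeq r) x → T (a • x) = a • T x) := by
  have hα0 : ∀ i, n ≤ i → α i = 0 := by
    intro i hi
    by_contra h
    exact absurd ((hsupp i).mp h) (not_lt.mpr hi)
  have hsign : ∀ i, i < n → α i * Real.sign (α i) = |α i| := by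
    intro i hi
    have hne : α i ≠ 0 := (hsupp i).mpr hi
    rcases hne.lt_or_gt with h | h
    · rw [Real.sign_of_neg h, abs_of_neg h]; ring
    · rw [Real.sign_of_pos h, abs_of_pos h]; ring
  have habs1 : ∀ i, i < n → |Real.sign (α i)| = 1 := by
    intro i hi
    have hne : α i ≠ 0 := (hsupp i).mpr hi
    rcases hne.lt_or_gt with h | h
    · rw [Real.sign_of_neg h]; norm_num
    · rw [Real.sign_of_pos h]; norm_num
  have htsum_abs : ∑' i, |α i| = ∑ i ∈ Finset.range n, |α i| := by
    apply tsum_eq_sum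
    intro i hi
    rw [hα0 i (by simpa using hi)]
    simp
  refine ⟨?_, ?_, ?_⟩
  · intro x hx
    obtain ⟨⟨l, hl⟩, hlim⟩ := hx
    have hts : (∑' i, rSeq r i * x i) = r * x 0 := by
      rw [tsum_eq_single 0]
      · simp [rSeq]
      · intro i hi; simp [rSeq, hi]
    rw [hts] at hlim
    have hl' : l = r * x 0 := tendsto_nhds_unique hl hlim
    have hTx : Tendsto (T x) atTop (𝓝 l) := by
      have h1 : Tendsto (fun m => x (m - n)) atTop (𝓝 l) :=
        hl.comp (tendsto_sub_atTop_nat n)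
      apply h1.congr'
      filter_upwards [eventually_ge_atTop n] with m hm
      rw [hT x m, if_neg (not_lt.mpr hm)]
    have hsum2 : (∑' i, α i * T x i) = r * x 0 := by
      rw [tsum_eq_sum (s := Finset.range n)
        (by intro i hi; rw [hα0 i (by simpa using hi)]; ring)]
      have hc : ∀ i ∈ Finset.range n, α i * T x i = |α i| * x 0 := by
        intro i hi
        rw [hT x i, if_pos (Finset.mem_range.mp hi), ← mul_assoc,
          hsign i (Finset.mem_range.mp hi)]
      rw [Finset.sum_congr rfl hc, ← Finset.sum_mul, ← htsum_abs, ← hr]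
    constructor
    · exact ⟨⟨l, hTx⟩, by rw [hsum2, ← hl']; exact hTx⟩
    · have bddx : BddAbove (Set.range fun i => |x i|) := hl.abs.bddAbove_range
      have bddT : BddAbove (Set.range fun i => |T x i|) := hTx.abs.bddAbove_range
      unfold supNorm
      apply le_antisymm
      · apply ciSup_le
        intro i
        rw [hT x i]
        split_ifs with h
        · rw [abs_mul, habs1 i h, one_mul]
          exact le_ciSup bddx 0
        · exact le_ciSup bddx (i - n)
      · apply ciSup_le
        intro k
        have hk : |x k| = |T x (k + n)| := by
          rw [hT, if_neg (by omega)]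
          simp
        rw [hk]
        exact le_ciSup bddT (k + n)
  · intro x y _ _
    funext m
    simp only [hT, Pi.add_apply]
    split_ifs <;> ring
  · intro a x _
    funext m
    simp only [hT, Pi.smul_apply, smul_eq_mul]
    split_ifs <;> ring
end
end

section
/- Let α ∈ ℓ¹ with 0 < ‖α‖₁ < 1 and infinite support. Then W_α contains no isometric copy of W_{r·e₁*} for r = ‖α‖₁. In particular, the functional α ∈ ℓ¹ = W_α* does not attain its norm on W_α. -/
open Filter Topology

noncomputable section

/-!
Write `y = T u` for the image of `u = (1, r, r, …) ∈ W_{r·e₁*}` and `zₙ = T eₙ₊₁`. As `T` is a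
linear isometry, `‖y‖ = ‖zₙ‖ = ‖zₙ + zₘ‖ = 1` and `‖y + 2zₙ‖ = r + 2`. Each `zₙ` therefore has a
coordinate where `|yᵢ + 2zₙᵢ|` is almost `r + 2`, which forces `|yᵢ|` to be almost `r`; two
distinct `n` never share such a coordinate, because `|c + 2a| + |c + 2b| ≤ 4` whenever
`|a|, |b|, |a + b|, |c| ≤ 1`. So `|yᵢ|` comes close to `r` infinitely often and the limit of `y`,
which is `∑ αᵢ yᵢ`, has modulus at least `r = ‖α‖₁`. On the other hand, for `x` in the unit
ball of `W_α`, `|∑ αᵢ xᵢ| < ‖α‖₁`: the limit has modulus `< 1`, so eventually `|xᵢ| < 1`, and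
`α` has a nonzero coordinate there.
-/

lemma abs_le_supNorm_of_tendsto {x : ℕ → ℝ} {l : ℝ} (hx : Tendsto x atTop (𝓝 l)) (i : ℕ) :
    |x i| ≤ supNorm x :=
  le_ciSup hx.abs.bddAbove_range i

lemma supNorm_eq_of_abs_le_of_abs_eq {x : ℕ → ℝ} {c : ℝ} (hle : ∀ i, |x i| ≤ c) {i₀ : ℕ}
    (heq : |x i₀| = c) : supNorm x = c :=
  le_antisymm (ciSup_le hle) (heq ▸ le_ciSup ⟨c, by rintro _ ⟨i, rfl⟩; exact hle i⟩ i₀)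

lemma abs_tsum_mul_lt_tsum_abs {α x : ℕ → ℝ} (hsum : Summable fun i => |α i|)
    (hlt : ∑' i, |α i| < 1) (hinf : {i | α i ≠ 0}.Infinite) (hx : MemW α x)
    (hx1 : ∀ i, |x i| ≤ 1) : |∑' i, α i * x i| < ∑' i, |α i| := by
  have hle : ∀ i, |α i * x i| ≤ |α i| := fun i => by
    simpa [abs_mul] using mul_le_mul_of_nonneg_left (hx1 i) (abs_nonneg (α i))
  have hsum' : Summable fun i => |α i * x i| := hsum.of_nonneg_of_le (fun _ => abs_nonneg _) hle
  have htri : |∑' i, α i * x i| ≤ ∑' i, |α i * x i| := by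
    simpa only [Real.norm_eq_abs] using norm_tsum_le_tsum_norm (f := fun i => α i * x i) hsum'
  have hlim_lt : |∑' i, α i * x i| < 1 :=
    htri.trans_lt ((hsum'.tsum_le_tsum hle hsum).trans_lt hlt)
  obtain ⟨N, hN⟩ := eventually_atTop.1 (hx.2.abs.eventually_lt_const hlim_lt)
  obtain ⟨i₀, hi₀, hNi₀⟩ := hinf.exists_gt N
  have hstrict : |α i₀ * x i₀| < |α i₀| := by
    rw [abs_mul]
    exact mul_lt_of_lt_one_right (abs_pos.2 hi₀) (hN i₀ hNi₀.le)
  exact htri.trans_lt (hsum'.tsum_lt_tsum hle hstrict hsum)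

/- `|p| + |q| = max |p + q| |p - q|`, and here `p + q = 2c + 2(a + b)`, `p - q = 2(a - b)`. -/
lemma abs_add_two_mul_add_abs_add_two_mul_le_four {a b c : ℝ} (ha : |a| ≤ 1) (hb : |b| ≤ 1)
    (hab : |a + b| ≤ 1) (hc : |c| ≤ 1) : |c + 2 * a| + |c + 2 * b| ≤ 4 := by
  rw [abs_le] at ha hb hab hc
  rcases abs_cases (c + 2 * a) with ⟨h₁, -⟩ | ⟨h₁, -⟩ <;>
    rcases abs_cases (c + 2 * b) with ⟨h₂, -⟩ | ⟨h₂, -⟩ <;> linarith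

lemma le_abs_of_tendsto_of_le_supNorm_add_two_smul {y : ℕ → ℝ} {z : ℕ → ℕ → ℝ} {L r : ℝ}
    (hy : Tendsto y atTop (𝓝 L)) (hy1 : ∀ i, |y i| ≤ 1) (hz1 : ∀ n i, |z n i| ≤ 1)
    (hzz1 : ∀ n m, n ≠ m → ∀ i, |z n i + z m i| ≤ 1)
    (hyz : ∀ n, r + 2 ≤ supNorm (y + (2 : ℝ) • z n)) : r ≤ |L| := by
  by_contra! hLr
  obtain ⟨ρ, hLρ, hρr⟩ := exists_between hLr
  obtain ⟨N, hN⟩ := eventually_atTop.1 (hy.abs.eventually_lt_const hLρ)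
  have hcoord : ∀ n, ∃ i, ρ + 2 < |y i + 2 * z n i| := fun n =>
    exists_lt_of_lt_ciSup ((by linarith : ρ + 2 < r + 2).trans_le (hyz n))
  choose f hf using hcoord
  have hfN : Set.MapsTo f Set.univ (Set.Iio N) := by
    intro n _
    by_contra! hn
    have htri : |y (f n) + 2 * z n (f n)| ≤ |y (f n)| + 2 * |z n (f n)| := by
      simpa [abs_mul] using abs_add_le (y (f n)) (2 * z n (f n))
    linarith [hf n, hN (f n) (not_lt.1 hn), hz1 n (f n)]
  obtain ⟨n, -, m, -, hnm, hfnm⟩ :=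
    Set.infinite_univ.exists_ne_map_eq_of_mapsTo hfN (Set.finite_Iio N)
  have h4 := abs_add_two_mul_add_abs_add_two_mul_le_four (hz1 n (f n)) (hz1 m (f n))
    (hzz1 n m hnm (f n)) (hy1 (f n))
  linarith [hf n, hfnm ▸ hf m, abs_nonneg L]

lemma supNorm_single_one (k : ℕ) : supNorm (Pi.single k (1 : ℝ)) = 1 := by
  refine supNorm_eq_of_abs_le_of_abs_eq (i₀ := k) (fun i => ?_) (by simp)
  by_cases hik : i = k <;> simp [hik]

lemma supNorm_single_one_add_single_one {k l : ℕ} (hkl : k ≠ l) :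
    supNorm (Pi.single k (1 : ℝ) + Pi.single l 1) = 1 := by
  refine supNorm_eq_of_abs_le_of_abs_eq (i₀ := k) (fun i => ?_) (by simp [hkl])
  by_cases hik : i = k
  · subst hik; simp [hkl]
  · by_cases hil : i = l <;> simp [hik, hil, hkl.symm]

section TestVectors

variable {r : ℝ}

lemma memW_rSeq_iff {x : ℕ → ℝ} : MemW (rSeq r) x ↔ Tendsto x atTop (𝓝 (r * x 0)) := by
  have htsum : ∑' i, rSeq r i * x i = r * x 0 := by
    rw [tsum_eq_single 0 fun i hi => by simp [rSeq, hi]]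
    simp [rSeq]
  rw [MemW, htsum]
  exact ⟨fun h => h.2, fun h => ⟨⟨_, h⟩, h⟩⟩

lemma MemW.rSeq_add {x y : ℕ → ℝ} (hx : MemW (rSeq r) x) (hy : MemW (rSeq r) y) :
    MemW (rSeq r) (x + y) := by
  rw [memW_rSeq_iff] at hx hy ⊢
  rw [Pi.add_apply, mul_add]
  exact hx.add hy

lemma MemW.rSeq_smul {x : ℕ → ℝ} (a : ℝ) (hx : MemW (rSeq r) x) : MemW (rSeq r) (a • x) := by
  rw [memW_rSeq_iff] at hx ⊢
  rw [Pi.smul_apply, smul_eq_mul, mul_left_comm]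
  exact hx.const_mul a

def oneThenConst (r : ℝ) : ℕ → ℝ := fun i => if i = 0 then 1 else r

lemma memW_rSeq_oneThenConst : MemW (rSeq r) (oneThenConst r) := by
  rw [memW_rSeq_iff]
  refine tendsto_const_nhds.congr' ?_
  filter_upwards [eventually_ne_atTop 0] with i hi
  simp [oneThenConst, hi]

lemma memW_rSeq_single {k : ℕ} (hk : k ≠ 0) : MemW (rSeq r) (Pi.single k 1) := by
  rw [memW_rSeq_iff]
  refine tendsto_const_nhds.congr' ?_
  filter_upwards [eventually_ne_atTop k] with i hi
  simp [hi, hk.symm]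

lemma supNorm_oneThenConst (hr0 : 0 ≤ r) (hr1 : r ≤ 1) : supNorm (oneThenConst r) = 1 := by
  refine supNorm_eq_of_abs_le_of_abs_eq (i₀ := 0) (fun i => ?_) (by simp [oneThenConst])
  by_cases hi : i = 0 <;> simp [oneThenConst, hi, abs_of_nonneg hr0, hr1]

lemma supNorm_oneThenConst_add_two_smul_single (hr0 : 0 ≤ r) {k : ℕ} (hk : k ≠ 0) :
    supNorm (oneThenConst r + (2 : ℝ) • Pi.single k 1) = r + 2 := by
  refine supNorm_eq_of_abs_le_of_abs_eq (i₀ := k) (fun i => ?_) ?_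
  · by_cases hik : i = k
    · subst hik; simp [oneThenConst, hk, abs_of_nonneg (by linarith : 0 ≤ r + 2)]
    · by_cases hi : i = 0 <;> simp [oneThenConst, hi, hik, hk.symm, abs_of_nonneg hr0]
      linarith
  · simp [oneThenConst, hk, abs_of_nonneg (by linarith : 0 ≤ r + 2)]

end TestVectors

theorem stmt6_general (α : ℕ → ℝ) (hsum : Summable fun i => |α i|)
    (hlt : ∑' i, |α i| < 1)
    (hinf : {i | α i ≠ 0}.Infinite)
    (r : ℝ) (hr : r = ∑' i, |α i|) :
    (¬ ∃ T : (ℕ → ℝ) → (ℕ → ℝ),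
        (∀ x, MemW (rSeq r) x → MemW α (T x) ∧ supNorm (T x) = supNorm x) ∧
        (∀ x y, MemW (rSeq r) x → MemW (rSeq r) y → T (x + y) = T x + T y) ∧
        (∀ (a : ℝ) (x : ℕ → ℝ), MemW (rSeq r) x → T (a • x) = a • T x)) ∧
    (¬ ∃ x : ℕ → ℝ, MemW α x ∧ supNorm x = 1 ∧ |∑' i, α i * x i| = ∑' i, |α i|) := by
  refine ⟨?_, fun ⟨x, hx, hx1, heq⟩ => (abs_tsum_mul_lt_tsum_abs hsum hlt hinf hx
    fun i => hx1 ▸ abs_le_supNorm_of_tendsto hx.2 i).ne heq⟩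
  rintro ⟨T, hT, hadd, hsmul⟩
  have hr0 : 0 ≤ r := hr ▸ tsum_nonneg fun i => abs_nonneg (α i)
  have hr1 : r ≤ 1 := hr ▸ hlt.le
  have hu := memW_rSeq_oneThenConst (r := r)
  have he : ∀ n, MemW (rSeq r) (Pi.single (n + 1) 1) := fun n => memW_rSeq_single n.succ_ne_zero
  have hT1 : ∀ x, MemW (rSeq r) x → supNorm x = 1 → ∀ i, |T x i| ≤ 1 := fun x hx hx1 i =>
    hx1 ▸ (hT x hx).2 ▸ abs_le_supNorm_of_tendsto (hT x hx).1.2 i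
  have hlim : r ≤ |∑' i, α i * T (oneThenConst r) i| :=
    le_abs_of_tendsto_of_le_supNorm_add_two_smul (z := fun n => T (Pi.single (n + 1) 1))
      (hT _ hu).1.2 (hT1 _ hu (supNorm_oneThenConst hr0 hr1))
      (fun n => hT1 _ (he n) (supNorm_single_one _))
      (fun n m hnm i => by
        have h := hT1 _ ((he n).rSeq_add (he m)) (supNorm_single_one_add_single_one (by omega)) i
        rwa [hadd _ _ (he n) (he m)] at h)
      (fun n => by
        rw [← hsmul _ _ (he n), ← hadd _ _ hu ((he n).rSeq_smul 2),
          (hT _ (hu.rSeq_add ((he n).rSeq_smul 2))).2,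
          supNorm_oneThenConst_add_two_smul_single hr0 n.succ_ne_zero])
  exact (abs_tsum_mul_lt_tsum_abs hsum hlt hinf (hT _ hu).1
    (hT1 _ hu (supNorm_oneThenConst hr0 hr1))).not_ge (hr ▸ hlim)

/-- if `0 < ‖α‖₁ < 1` and `α` has infinite support, then `W_α` contains
no isometric copy of `W_{r·e₁*}` for `r = ‖α‖₁`; in particular the functional `α` does
not attain its norm on the unit sphere of `W_α`. -/
theorem stmt6 (α : ℕ → ℝ) (hsum : Summable fun i => |α i|)
    (hpos : 0 < ∑' i, |α i|) (hlt : ∑' i, |α i| < 1)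
    (hinf : {i | α i ≠ 0}.Infinite)
    (r : ℝ) (hr : r = ∑' i, |α i|) :
    (¬ ∃ T : (ℕ → ℝ) → (ℕ → ℝ),
        (∀ x, MemW (rSeq r) x → MemW α (T x) ∧ supNorm (T x) = supNorm x) ∧
        (∀ x y, MemW (rSeq r) x → MemW (rSeq r) y → T (x + y) = T x + T y) ∧
        (∀ (a : ℝ) (x : ℕ → ℝ), MemW (rSeq r) x → T (a • x) = a • T x)) ∧
    (¬ ∃ x : ℕ → ℝ, MemW α x ∧ supNorm x = 1 ∧ |∑' i, α i * x i| = ∑' i, |α i|) :=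
  stmt6_general α hsum hlt hinf r hr
end
end

section
/- Let α = (1/(n(n+1)))_{n≥1} and β = (1/2ⁿ)_{n≥1} in ℓ¹. Then the map S : W_α → W_β defined by S(w) = (Σ_{n=1}^∞ γ_n w(n), w(1), w(2), ...), where γ_n = 2(α(n) − β(n+1)), is a linear isometry from W_α into W_β. -/
/-! The weights `γ k` are nonnegative, because `(k + 1)(k + 2) ≤ 2 ^ (k + 2)`, and sum to
`2 (1 - 1/2) = 1`; hence `|∑ γ k * w k| ≤ ‖w‖∞`, and prepending this number to `w` does not change
the sup norm. Since `β 0 = 1/2`, the weights satisfy `β 0 * γ k + β (k + 1) = α k`, so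
`∑ β i * (S w) i = ∑ α k * w k`, which is the common limit of `w` and `S w`. -/

open Filter Topology

noncomputable section

lemma hasSum_one_div_succ_mul_add_two :
    HasSum (fun m : ℕ => 1 / (((m : ℝ) + 1) * ((m : ℝ) + 2))) 1 := by
  have hpartial (n : ℕ) :
      ∑ m ∈ Finset.range n, 1 / (((m : ℝ) + 1) * ((m : ℝ) + 2)) = 1 - 1 / ((n : ℝ) + 1) := by
    induction n with
    | zero => norm_num
    | succ n ih =>
      rw [Finset.sum_range_succ, ih]
      push_cast
      field_simp
      ring
  rw [hasSum_iff_tendsto_nat_of_nonneg (fun m => by positivity)]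
  simp only [hpartial]
  simpa using (tendsto_const_nhds (x := (1 : ℝ))).sub tendsto_one_div_add_atTop_nhds_zero_nat

lemma succ_mul_add_two_le_two_pow (m : ℕ) : (m + 1) * (m + 2) ≤ 2 ^ (m + 2) := by
  induction m with
  | zero => norm_num
  | succ n ih =>
    have hn : n + 1 < 2 ^ (n + 1) := Nat.lt_two_pow_self
    calc (n + 1 + 1) * (n + 1 + 2) = (n + 1) * (n + 2) + 2 * (n + 2) := by ring
      _ ≤ 2 ^ (n + 2) + 2 * 2 ^ (n + 1) := by gcongr; omega
      _ = 2 ^ (n + 1 + 2) := by ring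

lemma one_div_two_pow_add_two_le (m : ℕ) :
    (1 : ℝ) / 2 ^ (m + 2) ≤ 1 / (((m : ℝ) + 1) * ((m : ℝ) + 2)) :=
  one_div_le_one_div_of_le (by positivity) (by exact_mod_cast succ_mul_add_two_le_two_pow m)

lemma hasSum_one_div_two_pow_succ : HasSum (fun m : ℕ => (1 : ℝ) / 2 ^ (m + 1)) 1 := by
  convert hasSum_geometric_two' (1 : ℝ) using 2 with m
  ring

section WeightedSums

variable {γ w : ℕ → ℝ}

lemma abs_le_supNorm (hw : BddAbove (Set.range fun i => |w i|)) (i : ℕ) : |w i| ≤ supNorm w :=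
  le_ciSup hw i

lemma summable_mul_of_bddAbove_abs (hγ : Summable γ) (hw : BddAbove (Set.range fun i => |w i|)) :
    Summable fun k => γ k * w k :=
  hγ.abs.mul_right (supNorm w) |>.of_norm_bounded fun k => by
    rw [Real.norm_eq_abs, abs_mul]
    exact mul_le_mul_of_nonneg_left (abs_le_supNorm hw k) (abs_nonneg _)

lemma abs_tsum_mul_le_mul_supNorm {c : ℝ} (hγ0 : ∀ k, 0 ≤ γ k) (hγ : HasSum γ c)
    (hw : BddAbove (Set.range fun i => |w i|)) : |∑' k, γ k * w k| ≤ c * supNorm w := by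
  simpa only [Real.norm_eq_abs] using
    tsum_of_norm_bounded (f := fun k => γ k * w k) (hγ.mul_right (supNorm w)) fun k => by
      rw [Real.norm_eq_abs, abs_mul, abs_of_nonneg (hγ0 k)]
      exact mul_le_mul_of_nonneg_left (abs_le_supNorm hw k) (hγ0 k)

end WeightedSums

section ShiftedSequences

variable {x w : ℕ → ℝ}

lemma supNorm_eq_of_succ (hw : BddAbove (Set.range fun i => |w i|))
    (hx : ∀ k, x (k + 1) = w k) (h0 : |x 0| ≤ supNorm w) : supNorm x = supNorm w := by
  have hxw (i : ℕ) : |x i| ≤ supNorm w := by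
    rcases i with _ | k
    · exact h0
    · rw [hx]; exact abs_le_supNorm hw k
  refine le_antisymm (ciSup_le hxw) (ciSup_le fun k => ?_)
  rw [← hx]
  exact le_ciSup (f := fun i => |x i|) ⟨_, Set.forall_mem_range.2 hxw⟩ (k + 1)

lemma memW_of_succ {α β γ : ℕ → ℝ} (hβ : Summable β) (hγ : Summable γ)
    (hαβγ : ∀ k, β 0 * γ k + β (k + 1) = α k) (hw : MemW α w)
    (h0 : x 0 = ∑' k, γ k * w k) (hx : ∀ k, x (k + 1) = w k) : MemW β x := by
  obtain ⟨⟨l, hl⟩, hlim⟩ := hw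
  have hbdd := hl.abs.bddAbove_range
  have hconv : Tendsto x atTop (𝓝 (∑' k, α k * w k)) :=
    (tendsto_add_atTop_iff_nat 1).1 (by simpa only [hx] using hlim)
  refine ⟨⟨_, hconv⟩, ?_⟩
  have hβw : Summable fun k => β (k + 1) * w k :=
    summable_mul_of_bddAbove_abs ((summable_nat_add_iff 1).2 hβ) hbdd
  have hγw := summable_mul_of_bddAbove_abs hγ hbdd
  have hβx : Summable fun i => β i * x i :=
    (summable_nat_add_iff 1).1 (by simpa only [hx] using hβw)
  suffices ∑' i, β i * x i = ∑' k, α k * w k by rwa [this]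
  calc ∑' i, β i * x i = β 0 * ∑' k, γ k * w k + ∑' k, β (k + 1) * w k := by
        rw [hβx.tsum_eq_zero_add, h0]
        simp only [hx]
    _ = ∑' k, (β 0 * γ k + β (k + 1)) * w k := by
        rw [← tsum_mul_left, ← (hγw.mul_left _).tsum_add hβw]
        simp only [add_mul, mul_assoc]
    _ = ∑' k, α k * w k := by simp only [hαβγ]

end ShiftedSequences

/-- with `α(n) = 1/(n(n+1))`, `β(n) = 1/2ⁿ` (0-indexed here, so
`α m = 1/((m+1)(m+2))`, `β m = 1/2^(m+1)`) and `γ_n = 2(α(n) − β(n+1))`, the map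
`S w = (∑ γ_n w(n), w(1), w(2), …)` is a linear isometry from `W_α` into `W_β`. -/
theorem stmt8 (α β γ : ℕ → ℝ)
    (hα : ∀ m, α m = 1 / (((m : ℝ) + 1) * ((m : ℝ) + 2)))
    (hβ : ∀ m, β m = 1 / 2 ^ (m + 1))
    (hγ : ∀ m, γ m = 2 * (α m - β (m + 1)))
    (S : (ℕ → ℝ) → (ℕ → ℝ))
    (hS : ∀ w m, S w m = if m = 0 then ∑' k, γ k * w k else w (m - 1)) :
    (∀ w, MemW α w → MemW β (S w) ∧ supNorm (S w) = supNorm w) ∧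
    (∀ w v, MemW α w → MemW α v → S (w + v) = S w + S v) ∧
    (∀ (a : ℝ) (w : ℕ → ℝ), MemW α w → S (a • w) = a • S w) := by
  have hαsum : HasSum α 1 := by rw [funext hα]; exact hasSum_one_div_succ_mul_add_two
  have hβsum : HasSum β 1 := by rw [funext hβ]; exact hasSum_one_div_two_pow_succ
  have hβ0 : β 0 = 1 / 2 := by rw [hβ]; norm_num
  have hγsum : HasSum γ 1 := by
    have h := ((hasSum_nat_add_iff' 1).2 hβsum |> hαsum.sub).mul_left 2
    norm_num [hβ0] at h
    rwa [funext hγ]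
  have hγ0 (m : ℕ) : 0 ≤ γ m := by
    rw [hγ, hα, hβ]; linarith [one_div_two_pow_add_two_le m]
  have hαβγ (k : ℕ) : β 0 * γ k + β (k + 1) = α k := by rw [hγ, hβ0]; ring
  have hbdd (w) (hw : MemW α w) : BddAbove (Set.range fun i => |w i|) :=
    hw.1.choose_spec.abs.bddAbove_range
  have hS0 (w) : S w 0 = ∑' k, γ k * w k := by simp [hS]
  have hSsucc (w) (k : ℕ) : S w (k + 1) = w k := by simp [hS]
  refine ⟨fun w hw => ⟨memW_of_succ hβsum.summable hγsum.summable hαβγ hw (hS0 w) (hSsucc w),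
    supNorm_eq_of_succ (hbdd w hw) (hSsucc w) ?_⟩, fun w v hw hv => funext fun m => ?_,
    fun a w _ => funext fun m => ?_⟩
  · simpa [hS0] using abs_tsum_mul_le_mul_supNorm hγ0 hγsum (hbdd w hw)
  · rcases m with _ | k
    · simp only [hS0, Pi.add_apply, mul_add]
      exact (summable_mul_of_bddAbove_abs hγsum.summable (hbdd w hw)).tsum_add
        (summable_mul_of_bddAbove_abs hγsum.summable (hbdd v hv))
    · simp [hSsucc]
  · rcases m with _ | k
    · rw [hS0, Pi.smul_apply, hS0]
      simp only [Pi.smul_apply, smul_eq_mul, mul_left_comm _ a, tsum_mul_left]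
    · simp [hSsucc]
end
end

section
/- Let β = (1/2ⁿ)_{n≥1} and α = (1/(n(n+1)))_{n≥1} in ℓ¹. Then the map T : W_β → W_α sending w to the sequence in which w(n) is repeated 2^{n−1} times in succession (i.e., Tw = (w(1), w(2), w(2), w(3), w(3), w(3), w(3), ...)) is a linear isometry from W_β into W_α. -/
/-!
The map `T` is precomposition with the dyadic block index `i ↦ ⌊log₂ (i + 1)⌋`, which is
surjective (so `T` preserves sup norms) and tends to infinity (so `T w` has the limit of `w`).
Since `α(i) = 1/(i+1) - 1/(i+2)`, the `α`-weights of the `n`-th block telescope to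
`1/2ⁿ - 1/2ⁿ⁺¹ = β(n)`; hence the partial sums of `∑ α(i) (T w)(i)` up to `2ᴺ - 1` are the
partial sums of `∑ β(n) w(n)` up to `N`, and the two series have the same value.
-/

open Filter Topology

noncomputable section

open Finset

/-- `dyadicBlock i = n` iff `2ⁿ - 1 ≤ i < 2ⁿ⁺¹ - 1`, the 0-indexed form of `2ⁿ⁻¹ ≤ i < 2ⁿ`. -/
def dyadicBlock (i : ℕ) : ℕ := Nat.log 2 (i + 1)

lemma dyadicBlock_eq_of_mem_Ico {i n : ℕ} (hi : i ∈ Ico (2 ^ n - 1) (2 ^ (n + 1) - 1)) :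
    dyadicBlock i = n := by
  rw [mem_Ico, pow_succ] at hi
  exact Nat.log_eq_of_pow_le_of_lt_pow (by omega) (by rw [pow_succ]; omega)

lemma dyadicBlock_surjective : Function.Surjective dyadicBlock := fun n =>
  ⟨2 ^ n - 1, dyadicBlock_eq_of_mem_Ico <| by
    have := Nat.one_le_two_pow (n := n)
    rw [mem_Ico, pow_succ]; omega⟩

lemma tendsto_dyadicBlock_atTop : Tendsto dyadicBlock atTop atTop :=
  tendsto_atTop_atTop.2 fun n => ⟨2 ^ n, fun i hi =>
    (Nat.le_log_iff_pow_le one_lt_two (by omega)).2 (by omega)⟩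

lemma sum_range_two_pow_sub_one_comp_dyadicBlock {M : Type*} [AddCommMonoid M]
    (f : ℕ → ℕ → M) (N : ℕ) :
    ∑ i ∈ range (2 ^ N - 1), f i (dyadicBlock i) =
      ∑ n ∈ range N, ∑ i ∈ Ico (2 ^ n - 1) (2 ^ (n + 1) - 1), f i n := by
  induction N with
  | zero => simp
  | succ N ih =>
    have hmono : 2 ^ N - 1 ≤ 2 ^ (N + 1) - 1 := by
      have := Nat.pow_le_pow_right two_pos N.le_succ; omega
    rw [sum_range_succ, ← ih, ← sum_range_add_sum_Ico _ hmono]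
    congr 1
    exact sum_congr rfl fun i hi => by rw [dyadicBlock_eq_of_mem_Ico hi]

lemma tsum_comp_dyadicBlock {M : Type*} [AddCommMonoid M] [TopologicalSpace M] [T2Space M]
    {f : ℕ → ℕ → M} (hf : Summable fun i => f i (dyadicBlock i))
    (hg : Summable fun n => ∑ i ∈ Ico (2 ^ n - 1) (2 ^ (n + 1) - 1), f i n) :
    ∑' i, f i (dyadicBlock i) = ∑' n, ∑ i ∈ Ico (2 ^ n - 1) (2 ^ (n + 1) - 1), f i n := by
  have hpow : Tendsto (fun N => 2 ^ N - 1) atTop atTop :=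
    (tendsto_sub_atTop_nat 1).comp (tendsto_pow_atTop_atTop_of_one_lt one_lt_two)
  refine tendsto_nhds_unique ?_ hg.hasSum.tendsto_sum_nat
  exact (hf.hasSum.tendsto_sum_nat.comp hpow).congr
    (sum_range_two_pow_sub_one_comp_dyadicBlock f)

lemma Summable.mul_of_tendsto {a x : ℕ → ℝ} {l : ℝ} (ha : Summable a)
    (hx : Tendsto x atTop (𝓝 l)) : Summable fun i => a i * x i := by
  obtain ⟨C, hC⟩ := hx.norm.bddAbove_range
  refine .of_norm_bounded (ha.norm.mul_right C) fun i => ?_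
  rw [norm_mul]
  exact mul_le_mul_of_nonneg_left (hC ⟨i, rfl⟩) (norm_nonneg _)

lemma MemW.comp_dyadicBlock {a b w : ℕ → ℝ}
    (hab : ∀ n, ∑ i ∈ Ico (2 ^ n - 1) (2 ^ (n + 1) - 1), a i = b n)
    (ha : Summable a) (hb : Summable b) (hw : MemW b w) : MemW a (w ∘ dyadicBlock) := by
  obtain ⟨⟨l, hl⟩, hlim⟩ := hw
  have hsum : ∑' i, a i * w (dyadicBlock i) = ∑' n, b n * w n := by
    simp_rw [← hab, sum_mul]
    refine tsum_comp_dyadicBlock (f := fun i n => a i * w n)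
      (ha.mul_of_tendsto (hl.comp tendsto_dyadicBlock_atTop)) ?_
    simpa only [← sum_mul, hab] using hb.mul_of_tendsto hl
  refine ⟨⟨l, hl.comp tendsto_dyadicBlock_atTop⟩, ?_⟩
  rw [Function.comp_def, hsum]
  exact hlim.comp tendsto_dyadicBlock_atTop

lemma supNorm_comp_of_surjective {f : ℕ → ℕ} (hf : Function.Surjective f) (x : ℕ → ℝ) :
    supNorm (x ∘ f) = supNorm x :=
  hf.iSup_comp fun n => |x n|

lemma sum_Ico_one_div_succ_mul_succ_succ {m n : ℕ} (hmn : m ≤ n) :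
    ∑ i ∈ Ico m n, 1 / (((i : ℝ) + 1) * ((i : ℝ) + 2)) =
      1 / ((m : ℝ) + 1) - 1 / ((n : ℝ) + 1) := by
  have htel : ∀ i : ℕ, 1 / (((i : ℝ) + 1) * ((i : ℝ) + 2)) =
      -(1 / (((i + 1 : ℕ) : ℝ) + 1)) - -(1 / ((i : ℝ) + 1)) := fun i => by
    push_cast; field_simp; ring
  rw [sum_congr rfl fun i _ => htel i, sum_Ico_sub (fun i : ℕ => -(1 / ((i : ℝ) + 1))) hmn]
  ring

lemma summable_one_div_succ_mul_succ_succ :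
    Summable fun i : ℕ => 1 / (((i : ℝ) + 1) * ((i : ℝ) + 2)) := by
  refine summable_of_sum_range_le (c := 1) (fun i => by positivity) fun n => ?_
  rw [← Nat.Ico_zero_eq_range, sum_Ico_one_div_succ_mul_succ_succ n.zero_le]
  have : (0 : ℝ) ≤ 1 / ((n : ℝ) + 1) := by positivity
  norm_num
  linarith

lemma sum_dyadicBlock_one_div_succ_mul_succ_succ (n : ℕ) :
    ∑ i ∈ Ico (2 ^ n - 1 : ℕ) (2 ^ (n + 1) - 1), 1 / (((i : ℝ) + 1) * ((i : ℝ) + 2)) =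
      1 / 2 ^ (n + 1) := by
  have h1 := Nat.one_le_two_pow (n := n)
  rw [sum_Ico_one_div_succ_mul_succ_succ (by rw [pow_succ]; omega)]
  push_cast [Nat.cast_sub h1, Nat.cast_sub (Nat.one_le_two_pow (n := n + 1))]
  simp only [sub_add_cancel, pow_succ]
  field_simp
  ring

/-- with `β(n) = 1/2ⁿ` and `α(n) = 1/(n(n+1))` (0-indexed here), the map
repeating `w(n)` exactly `2^(n-1)` times, i.e. `(T w) i = w (Nat.log 2 (i+1))`,
is a linear isometry from `W_β` into `W_α`. -/
theorem stmt9 (α β : ℕ → ℝ)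
    (hα : ∀ m, α m = 1 / (((m : ℝ) + 1) * ((m : ℝ) + 2)))
    (hβ : ∀ m, β m = 1 / 2 ^ (m + 1))
    (T : (ℕ → ℝ) → (ℕ → ℝ))
    (hT : ∀ w m, T w m = w (Nat.log 2 (m + 1))) :
    (∀ w, MemW β w → MemW α (T w) ∧ supNorm (T w) = supNorm w) ∧
    (∀ w v, MemW β w → MemW β v → T (w + v) = T w + T v) ∧
    (∀ (a : ℝ) (w : ℕ → ℝ), MemW β w → T (a • w) = a • T w) := by
  have hTw : ∀ w, T w = w ∘ dyadicBlock := fun w => funext (hT w)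
  obtain rfl : α = fun i : ℕ => 1 / (((i : ℝ) + 1) * ((i : ℝ) + 2)) := funext hα
  obtain rfl : β = fun i : ℕ => 1 / (2 : ℝ) ^ (i + 1) := funext hβ
  have hβsum : Summable fun i : ℕ => 1 / (2 : ℝ) ^ (i + 1) := by
    simpa [pow_succ, div_eq_mul_inv, mul_comm] using summable_geometric_two' 1
  refine ⟨fun w hw => ⟨?_, ?_⟩, fun w v _ _ => by simp only [hTw]; rfl,
    fun a w _ => by simp only [hTw]; rfl⟩
  · rw [hTw]
    exact hw.comp_dyadicBlock sum_dyadicBlock_one_div_succ_mul_succ_succ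
      summable_one_div_succ_mul_succ_succ hβsum
  · rw [hTw]
    exact supNorm_comp_of_surjective dyadicBlock_surjective w
end
end

section
/- Let α ∈ ℓ¹ with ‖α‖₁ = 1 and α(n) > 0 for every n. If W_α contains a subspace isometric to W_β for some β ∈ ℓ¹ with ‖β‖₁ = 1, then the set {n : β(n) < 0} is finite and the set {n : β(n) = 0} is empty. -/
open Filter Topology

noncomputable section

/-!
Let `T` embed `W_β` isometrically into `W_α`. For `|β n| < 1/4` there is a peak vector
`x ∈ W_β` with `x n = 1` and `|x i| ≤ 1/3` elsewhere; at a coordinate `m` where `|T x m|` nearly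
attains `‖T x‖ = 1`, the functional `y ↦ T y m` is uniformly close to `± y n` on the unit ball,
and distinct `n` give distinct `m`. Letting `n → ∞` along one sign class identifies the limit
functionals: `lim T y = ς · lim y`, that is `∑ α i T y i = ς ∑ β i y i`, for a sign `ς`.
As every `α m > 0`, the image of `ς` times a vector norming `β` has `m`-th coordinate close to
`1`; comparing with the approximation at `n` shows that the sign attached to `n` is
`ς · sign (β n)`, so `β n ≠ 0`. Infinitely many negative `β n` would, by the same limit
argument, also give `lim T y = -ς · lim y`, which fails on a norming vector.
-/

lemma tsum_mul_le_add_sub {a z : ℕ → ℝ} (ha : Summable a) (ha0 : ∀ i, 0 ≤ a i)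
    (hz : ∀ i, |z i| ≤ 1) (j : ℕ) : ∑' i, a i * z i ≤ a j * z j + (∑' i, a i - a j) := by
  have hs : Summable fun i => a i * z i := ha.of_norm_bounded fun i => by
    rw [Real.norm_eq_abs, abs_mul, abs_of_nonneg (ha0 i)]
    exact mul_le_of_le_one_right (ha0 i) (hz i)
  have hle : ∀ i, 0 ≤ a i - a i * z i := fun i => by
    nlinarith [ha0 i, (abs_le.1 (hz i)).2]
  have := (ha.sub hs).le_tsum j fun i _ => hle i
  rw [ha.tsum_sub hs] at this
  linarith

lemma eq_mul_of_frequently_abs_sub_le {u v : ℕ → ℝ} {a b ϑ : ℝ}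
    (hu : Tendsto u atTop (𝓝 a)) (hv : Tendsto v atTop (𝓝 b))
    (h : ∀ ε > 0, ∃ᶠ p : ℕ × ℕ in atTop, |u p.1 - ϑ * v p.2| ≤ ε) : a = ϑ * b := by
  have hlim : Tendsto (fun p : ℕ × ℕ => |u p.1 - ϑ * v p.2|) atTop (𝓝 |a - ϑ * b|) := by
    rw [← prod_atTop_atTop_eq]
    exact ((hu.comp tendsto_fst).sub ((hv.comp tendsto_snd).const_mul ϑ)).abs
  have : |a - ϑ * b| ≤ 0 := le_of_forall_pos_le_add fun ε hε => by
    simpa using le_of_tendsto_of_frequently hlim (h ε hε)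
  exact sub_eq_zero.1 (abs_nonpos_iff.1 this)

lemma exists_mem_le_of_injOn {S : Set ℕ} (hS : S.Infinite) {m : ℕ → ℕ} (hm : S.InjOn m)
    {e : ℕ → ℝ} (he : Tendsto e atTop (𝓝 0)) {ε : ℝ} (hε : 0 < ε) (N : ℕ) :
    ∃ n ∈ S, N ≤ n ∧ N ≤ m n ∧ e n ≤ ε := by
  have hfin : {n | ¬(n ∈ S → N ≤ m n)}.Finite := by
    refine Set.Finite.of_finite_image ((Set.finite_Iio N).subset ?_) (hm.mono fun n hn => ?_)
    · rintro _ ⟨n, hn, rfl⟩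
      exact lt_of_not_ge (Classical.not_imp.1 hn).2
    · exact (Classical.not_imp.1 hn).1
  have hev : ∀ᶠ n in cofinite, (n ∈ S → N ≤ m n) ∧ N ≤ n ∧ e n ≤ ε :=
    (eventually_cofinite.2 hfin).and (Nat.cofinite_eq_atTop ▸
      (eventually_ge_atTop N).and (he.eventually (ge_mem_nhds hε)))
  obtain ⟨n, hnS, hm, hn, hen⟩ :=
    ((frequently_cofinite_iff_infinite.2 hS).and_eventually hev).exists
  exact ⟨n, hnS, hn, hm hnS, hen⟩

lemma eq_of_abs_eq_one_of_mul_pos {a b : ℝ} (ha : |a| = 1) (hb : |b| = 1) (hab : 0 < a * b) :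
    a = b := by
  rcases (abs_eq zero_le_one).1 ha with rfl | rfl <;>
    rcases (abs_eq zero_le_one).1 hb with rfl | rfl <;> first | rfl | norm_num at hab

lemma exists_abs_eq_one_abs_sub {a : ℝ} (ha : |a| ≤ 1) :
    ∃ s : ℝ, |s| = 1 ∧ |a - s| = 1 - |a| := by
  rcases le_total 0 a with h | h
  · refine ⟨1, abs_one, ?_⟩
    rw [abs_of_nonneg h] at ha ⊢
    rw [abs_of_nonpos (by linarith)]
    ring
  · refine ⟨-1, by simp, ?_⟩
    rw [abs_of_nonpos h] at ha ⊢
    rw [abs_of_nonneg (by linarith)]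
    ring

lemma abs_sign_le_one (a : ℝ) : |(SignType.sign a : ℝ)| ≤ 1 := by
  rcases lt_trichotomy a 0 with h | h | h <;> simp [h]

section MemW

variable {β x y : ℕ → ℝ}

lemma MemW.bddAbove (hx : MemW β x) : BddAbove (Set.range fun i => |x i|) :=
  hx.2.abs.bddAbove_range

lemma MemW.abs_le_supNorm (hx : MemW β x) (i : ℕ) : |x i| ≤ supNorm x :=
  le_ciSup hx.bddAbove i

lemma supNorm_le {c : ℝ} (h : ∀ i, |x i| ≤ c) : supNorm x ≤ c :=
  ciSup_le h

lemma MemW.summable_mul (hβ : Summable fun i => |β i|) (hx : MemW β x) :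
    Summable fun i => β i * x i := by
  obtain ⟨C, hC⟩ := hx.bddAbove
  refine (hβ.mul_right C).of_norm_bounded fun i => ?_
  rw [Real.norm_eq_abs, abs_mul]
  exact mul_le_mul_of_nonneg_left (hC ⟨i, rfl⟩) (abs_nonneg _)

lemma MemW.add (hβ : Summable fun i => |β i|) (hx : MemW β x) (hy : MemW β y) :
    MemW β (x + y) := by
  have hsum : ∑' i, β i * (x + y) i = ∑' i, β i * x i + ∑' i, β i * y i := by
    simp only [Pi.add_apply, mul_add]
    exact (hx.summable_mul hβ).tsum_add (hy.summable_mul hβ)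
  exact ⟨⟨_, hx.2.add hy.2⟩, hsum ▸ hx.2.add hy.2⟩

lemma MemW.smul (a : ℝ) (hx : MemW β x) : MemW β (a • x) := by
  have hsum : ∑' i, β i * (a • x) i = a * ∑' i, β i * x i := by
    simp only [Pi.smul_apply, smul_eq_mul, mul_left_comm (β _)]
    exact tsum_mul_left
  exact ⟨⟨_, hx.2.const_mul a⟩, hsum ▸ hx.2.const_mul a⟩

lemma memW_of_eventually_eq {c : ℝ} (h : ∀ᶠ i in atTop, x i = c)
    (hc : ∑' i, β i * x i = c) : MemW β x := by
  have hx : Tendsto x atTop (𝓝 c) := tendsto_const_nhds.congr' (EventuallyEq.symm h)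
  exact ⟨⟨c, hx⟩, hc ▸ hx⟩

end MemW

def UnitBall (β : ℕ → ℝ) : Set (ℕ → ℝ) := {y | MemW β y ∧ ∀ i, |y i| ≤ 1}

structure IsLinearIsometry (α β : ℕ → ℝ) (T : (ℕ → ℝ) → ℕ → ℝ) : Prop where
  memW : ∀ x, MemW β x → MemW α (T x)
  supNorm_eq : ∀ x, MemW β x → supNorm (T x) = supNorm x
  map_add : ∀ x y, MemW β x → MemW β y → T (x + y) = T x + T y
  map_smul : ∀ (a : ℝ) x, MemW β x → T (a • x) = a • T x

namespace IsLinearIsometry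

variable {α β : ℕ → ℝ} {T : (ℕ → ℝ) → ℕ → ℝ}

lemma abs_apply_le (hT : IsLinearIsometry α β T) {x : ℕ → ℝ} (hx : MemW β x) {c : ℝ}
    (h : ∀ i, |x i| ≤ c) (j : ℕ) : |T x j| ≤ c :=
  calc |T x j| ≤ supNorm (T x) := (hT.memW x hx).abs_le_supNorm j
    _ = supNorm x := hT.supNorm_eq x hx
    _ ≤ c := supNorm_le h

lemma map_add_smul (hT : IsLinearIsometry α β T) {x y : ℕ → ℝ} (hx : MemW β x)
    (hy : MemW β y) (a : ℝ) : T (x + a • y) = T x + a • T y := by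
  rw [hT.map_add x _ hx (hy.smul a), hT.map_smul a y hy]

end IsLinearIsometry

def IsPeak (β x : ℕ → ℝ) (n : ℕ) : Prop := MemW β x ∧ x n = 1 ∧ ∀ i ≠ n, |x i| ≤ 1 / 3

lemma exists_isPeak_of_finset {β : ℕ → ℝ} {n : ℕ} {A : Finset ℕ} (hnA : n ∉ A)
    (hA : 0 < ∑ i ∈ A, |β i|) (hβn : 3 * |β n| ≤ ∑ i ∈ A, |β i|) : ∃ x, IsPeak β x n := by
  set S := ∑ j ∈ A, |β j|
  -- the entries on `A` are chosen so that they cancel `β n * x n` in `∑' i, β i * x i`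
  let x : ℕ → ℝ := fun i =>
    if i = n then 1 else if i ∈ A then -β n * SignType.sign (β i) / S else 0
  have hsupp : ∀ i ∉ insert n A, x i = 0 := fun i hi => by
    rw [Finset.mem_insert, not_or] at hi
    simp [x, hi.1, hi.2]
  have hsum : ∑' i, β i * x i = 0 := by
    rw [tsum_eq_sum fun i hi => by rw [hsupp i hi, mul_zero], Finset.sum_insert hnA]
    have hA' : ∀ i ∈ A, β i * x i = -β n / S * |β i| := fun i hi => by
      have hin : i ≠ n := ne_of_mem_of_not_mem hi hnA
      simp only [x, if_neg hin, if_pos hi, ← self_mul_sign (β i)]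
      ring
    rw [Finset.sum_congr rfl hA', ← Finset.mul_sum, div_mul_cancel₀ _ hA.ne']
    simp [x]
  refine ⟨x, memW_of_eventually_eq ?_ hsum, by simp [x], fun i hin => ?_⟩
  · filter_upwards [eventually_gt_atTop ((insert n A).sup id)] with i hi
    exact hsupp i fun hmem => (Finset.le_sup (f := id) hmem).not_gt hi
  · change |ite _ _ _| ≤ _
    rw [if_neg hin]
    split_ifs
    · rw [abs_div, abs_mul, abs_neg, abs_of_pos hA, div_le_iff₀ hA]
      nlinarith [abs_nonneg (β n), abs_sign_le_one (β i)]
    · norm_num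

lemma exists_isPeak {β : ℕ → ℝ} (hβ : Summable fun i => |β i|) (hβ1 : ∑' i, |β i| = 1)
    {n : ℕ} (hn : |β n| < 1 / 4) : ∃ x, IsPeak β x n := by
  have hlim : Tendsto (fun M => ∑ i ∈ Finset.range M, |β i|) atTop (𝓝 1) :=
    hβ1 ▸ hβ.hasSum.tendsto_sum_nat
  obtain ⟨M, hM, hnM⟩ :=
    ((hlim.eventually (lt_mem_nhds (by linarith : 4 * |β n| < 1))).and
      (eventually_gt_atTop n)).exists
  have hsplit := Finset.sum_erase_add _ (fun i => |β i|) (Finset.mem_range.2 hnM)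
  exact exists_isPeak_of_finset (Finset.notMem_erase n _) (by linarith [abs_nonneg (β n)])
    (by linarith)

lemma IsPeak.mem_unitBall {β x : ℕ → ℝ} {n : ℕ} (hx : IsPeak β x n) : x ∈ UnitBall β := by
  refine ⟨hx.1, fun i => ?_⟩
  rcases eq_or_ne i n with rfl | hin
  · simp [hx.2.1]
  · linarith [hx.2.2 i hin]

lemma exists_mem_unitBall_sign {β : ℕ → ℝ} (hβ : Summable fun i => |β i|)
    (hβ1 : ∑' i, |β i| = 1) {δ : ℝ} (hδ : 0 < δ) (N : ℕ) :
    ∃ y ∈ UnitBall β, (∀ i ≤ N, y i = SignType.sign (β i)) ∧ 1 - δ ≤ ∑' i, β i * y i := by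
  obtain ⟨M, hτ, hNM⟩ := (((tendsto_sum_nat_add fun i => |β i|).eventually
    (ge_mem_nhds (lt_min (half_pos hδ) one_half_pos))).and (eventually_gt_atTop N)).exists
  set τ := ∑' i, |β (i + M)|
  set S := ∑ i ∈ Finset.range M, |β i|
  set r := ∑' i, β (i + M)
  have hSτ : S + τ = 1 := hβ1 ▸ hβ.sum_add_tsum_nat_add M
  have hr : |r| ≤ τ := by
    have hβM : Summable fun i => ‖β (i + M)‖ :=
      (summable_nat_add_iff (f := fun i => |β i|) M).2 hβ
    simpa only [Real.norm_eq_abs] using norm_tsum_le_tsum_norm hβM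
  have hτ := le_min_iff.1 hτ
  have hr' := abs_le.1 hr
  have h1r : 0 < 1 - r := by linarith
  -- `lim y = ∑' i, β i * y i` forces the tail value: `c = S + r * c`
  set c := S / (1 - r)
  have hcr : c * (1 - r) = S := div_mul_cancel₀ _ h1r.ne'
  have hc0 : 0 ≤ c := div_nonneg (by linarith [hτ.2]) h1r.le
  have hc1 : c ≤ 1 := by rw [div_le_one h1r]; linarith
  have hcδ : 1 - δ ≤ c := by
    rw [le_div_iff₀ h1r]
    nlinarith [abs_nonneg r]
  let y : ℕ → ℝ := fun i => if i < M then SignType.sign (β i) else c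
  have hy1 : ∀ i, |y i| ≤ 1 := fun i => by
    by_cases hi : i < M
    · simpa [y, hi] using abs_sign_le_one (β i)
    · simpa [y, hi, abs_of_nonneg hc0] using hc1
  have hsum : ∑' i, β i * y i = c := by
    have hs : Summable fun i => β i * y i := hβ.of_norm_bounded fun i => by
      rw [Real.norm_eq_abs, abs_mul]; exact mul_le_of_le_one_right (abs_nonneg _) (hy1 i)
    rw [← hs.sum_add_tsum_nat_add M]
    have hhead : ∑ i ∈ Finset.range M, β i * y i = S :=
      Finset.sum_congr rfl fun i hi => by simp [y, Finset.mem_range.1 hi, self_mul_sign]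
    have htail : ∑' i, β (i + M) * y (i + M) = r * c := by
      simp only [y, show ∀ i, ¬ i + M < M from fun i => by omega, if_false]
      exact tsum_mul_right
    rw [hhead, htail]
    linarith
  refine ⟨y, ⟨memW_of_eventually_eq ?_ hsum, hy1⟩, fun i hi => if_pos (by omega), hsum ▸ hcδ⟩
  filter_upwards [eventually_ge_atTop M] with i hi
  exact if_neg (by omega)

lemma eq_of_forall_mul_tsum_eq {β : ℕ → ℝ} (hβ : Summable fun i => |β i|)
    (hβ1 : ∑' i, |β i| = 1) {a b : ℝ}
    (h : ∀ y ∈ UnitBall β, a * ∑' i, β i * y i = b * ∑' i, β i * y i) : a = b := by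
  obtain ⟨y, hy, -, hby⟩ := exists_mem_unitBall_sign hβ hβ1 one_half_pos 0
  exact mul_right_cancel₀ (by linarith) (h y hy)

def CoordApprox (β : ℕ → ℝ) (T : (ℕ → ℝ) → ℕ → ℝ) (m n : ℕ) (s e : ℝ) : Prop :=
  ∀ y ∈ UnitBall β, |T y m - s * y n| ≤ e

namespace IsLinearIsometry

variable {α β : ℕ → ℝ} {T : (ℕ → ℝ) → ℕ → ℝ}

lemma abs_apply_add_half_abs_apply_le (hT : IsLinearIsometry α β T)
    (hβ : Summable fun i => |β i|) {x z : ℕ → ℝ} {n : ℕ} (hx : IsPeak β x n) (hz : MemW β z)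
    (hzn : z n = 0) (hz1 : ∀ i, |z i| ≤ 4 / 3) (j : ℕ) : |T x j| + |T z j| / 2 ≤ 1 := by
  have hsigned : ∀ σ : ℝ, |σ| = 1 → |T x j + σ / 2 * T z j| ≤ 1 := fun σ hσ => by
    have hw : ∀ i, |(x + (σ / 2) • z) i| ≤ 1 := fun i => by
      simp only [Pi.add_apply, Pi.smul_apply, smul_eq_mul]
      rcases eq_or_ne i n with rfl | hin
      · simp [hx.2.1, hzn]
      · calc |x i + σ / 2 * z i| ≤ |x i| + |σ| / 2 * |z i| :=
              (abs_add_le _ _).trans_eq (by rw [abs_mul, abs_div, abs_two])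
          _ ≤ 1 / 3 + 1 / 2 * (4 / 3) := by
              rw [hσ]; gcongr; exacts [hx.2.2 i hin, hz1 i]
          _ = 1 := by norm_num
    have := hT.abs_apply_le (hx.1.add hβ (hz.smul _)) hw j
    rwa [hT.map_add_smul hx.1 hz, Pi.add_apply, Pi.smul_apply, smul_eq_mul] at this
  have hplus := abs_le.1 (hsigned 1 abs_one)
  have hminus := abs_le.1 (hsigned (-1) (by simp))
  rcases abs_cases (T x j) with ⟨h1, -⟩ | ⟨h1, -⟩ <;>
    rcases abs_cases (T z j) with ⟨h2, -⟩ | ⟨h2, -⟩ <;>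
    linarith [hplus.1, hplus.2, hminus.1, hminus.2]

lemma exists_coordApprox (hT : IsLinearIsometry α β T) (hβ : Summable fun i => |β i|)
    {x : ℕ → ℝ} {n : ℕ} (hx : IsPeak β x n) {ε : ℝ} (hε : 0 < ε) :
    ∃ m s, |s| = 1 ∧ CoordApprox β T m n s ε := by
  obtain ⟨m, hm⟩ : ∃ m, 1 - ε / 3 < |T x m| := by
    refine exists_lt_of_lt_ciSup (show 1 - ε / 3 < supNorm (T x) from ?_)
    have := hx.1.abs_le_supNorm n
    rw [hx.2.1, abs_one] at this
    rw [hT.supNorm_eq x hx.1]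
    linarith
  obtain ⟨s, hs, hms⟩ := exists_abs_eq_one_abs_sub (hT.abs_apply_le hx.1 hx.mem_unitBall.2 m)
  refine ⟨m, s, hs, fun y hy => ?_⟩
  set z := y + (-y n) • x
  have hz : MemW β z := hy.1.add hβ (hx.1.smul _)
  have hzn : z n = 0 := by simp [z, hx.2.1]
  have hz1 : ∀ i, |z i| ≤ 4 / 3 := fun i => by
    rcases eq_or_ne i n with rfl | hin
    · rw [hzn]; norm_num
    · calc |z i| ≤ |y i| + |y n| * |x i| := by
            simp only [z, Pi.add_apply, Pi.smul_apply, smul_eq_mul, ← abs_neg (y n), ← abs_mul]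
            exact abs_add_le _ _
        _ ≤ 1 + 1 * (1 / 3) := by
            gcongr; exacts [hy.2 i, hy.2 n, hx.2.2 i hin]
        _ = 4 / 3 := by norm_num
  have hTz := hT.abs_apply_add_half_abs_apply_le hβ hx hz hzn hz1 m
  have hdecomp : T y m - s * y n = T z m + y n * (T x m - s) := by
    simp only [z, hT.map_add_smul hy.1 hx.1, Pi.add_apply, Pi.smul_apply, smul_eq_mul]
    ring
  calc |T y m - s * y n| ≤ |T z m| + |y n| * |T x m - s| := by
        rw [hdecomp, ← abs_mul]; exact abs_add_le _ _
    _ ≤ 2 * (1 - |T x m|) + 1 * (1 - |T x m|) := by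
        rw [hms]; gcongr
        · linarith
        · linarith [abs_nonneg (T z m)]
        · exact hy.2 n
    _ ≤ ε := by linarith

end IsLinearIsometry

lemma CoordApprox.eq_of_isPeak {β x : ℕ → ℝ} {T : (ℕ → ℝ) → ℕ → ℝ} {m n n' : ℕ}
    {s s' e e' : ℝ} (h : CoordApprox β T m n s e) (h' : CoordApprox β T m n' s' e')
    (hx : IsPeak β x n) (hs : |s| = 1) (hs' : |s'| = 1) (he : e + e' < 2 / 3) : n' = n := by
  by_contra hne
  have h1 := h x hx.mem_unitBall
  have h2 := h' x hx.mem_unitBall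
  rw [hx.2.1, mul_one] at h1
  have h3 : |s' * x n'| ≤ 1 / 3 := by rw [abs_mul, hs', one_mul]; exact hx.2.2 n' hne
  have h4 : |s| ≤ |T x m - s' * x n'| + |s' * x n'| + |-(T x m - s)| :=
    (congrArg abs (by ring)).trans_le (abs_add_three _ _ _)
  rw [abs_neg, hs] at h4
  linarith

namespace IsLinearIsometry

variable {α β : ℕ → ℝ} {T : (ℕ → ℝ) → ℕ → ℝ}

lemma tsum_eq_of_coordApprox (hT : IsLinearIsometry α β T) {S : Set ℕ} (hS : S.Infinite)
    {m : ℕ → ℕ} (hm : S.InjOn m) {e : ℕ → ℝ} (he : Tendsto e atTop (𝓝 0)) {ϑ : ℝ}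
    (happrox : ∀ n ∈ S, CoordApprox β T (m n) n ϑ (e n)) {y : ℕ → ℝ} (hy : y ∈ UnitBall β) :
    ∑' i, α i * T y i = ϑ * ∑' i, β i * y i := by
  refine eq_mul_of_frequently_abs_sub_le (hT.memW y hy.1).2 hy.1.2 fun ε hε =>
    frequently_atTop.2 fun N => ?_
  obtain ⟨n, hnS, hn, hmn, hen⟩ := exists_mem_le_of_injOn hS hm he hε (max N.1 N.2)
  exact ⟨(m n, n), ⟨le_of_max_le_left hmn, le_of_max_le_right hn⟩, (happrox n hnS y hy).trans hen⟩

lemma exists_mem_unitBall_apply_ge (hT : IsLinearIsometry α β T) (hα : Summable α)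
    (hα1 : ∑' i, α i = 1) (hαpos : ∀ i, 0 < α i) (hβ : Summable fun i => |β i|)
    (hβ1 : ∑' i, |β i| = 1) {ς : ℝ} (hς : |ς| = 1)
    (hΛ : ∀ y ∈ UnitBall β, ∑' i, α i * T y i = ς * ∑' i, β i * y i)
    (j : ℕ) {δ : ℝ} (hδ : 0 < δ) (N : ℕ) :
    ∃ w ∈ UnitBall β, (∀ i ≤ N, w i = ς * SignType.sign (β i)) ∧ 1 - δ ≤ T w j := by
  obtain ⟨y, hy, hyN, hyb⟩ := exists_mem_unitBall_sign hβ hβ1 (mul_pos hδ (hαpos j)) N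
  have hw : ς • y ∈ UnitBall β := ⟨hy.1.smul ς, fun i => by simpa [abs_mul, hς] using hy.2 i⟩
  refine ⟨ς • y, hw, fun i hi => by simp [hyN i hi], ?_⟩
  have hςς : ς * ς = 1 := by rw [← abs_mul_abs_self, hς, one_mul]
  have hΛw : ∑' i, α i * T (ς • y) i = ∑' i, β i * y i := by
    rw [hΛ _ hw]
    simp only [Pi.smul_apply, smul_eq_mul, mul_left_comm (β _)]
    rw [tsum_mul_left, ← mul_assoc, hςς, one_mul]
  have hlb := tsum_mul_le_add_sub hα (fun i => (hαpos i).le)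
    (fun i => hT.abs_apply_le hw.1 hw.2 i) j
  rw [hΛw, hα1] at hlb
  have : α j * (1 - δ) ≤ α j * T (ς • y) j := by linarith
  exact le_of_mul_le_mul_left this (hαpos j)

lemma mul_mul_sign_pos (hT : IsLinearIsometry α β T) (hα : Summable α)
    (hα1 : ∑' i, α i = 1) (hαpos : ∀ i, 0 < α i) (hβ : Summable fun i => |β i|)
    (hβ1 : ∑' i, |β i| = 1) {ς : ℝ} (hς : |ς| = 1)
    (hΛ : ∀ y ∈ UnitBall β, ∑' i, α i * T y i = ς * ∑' i, β i * y i)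
    {m n : ℕ} {s e : ℝ} (h : CoordApprox β T m n s e) (he : e < 1) :
    0 < s * (ς * SignType.sign (β n)) := by
  obtain ⟨w, hw, hwN, hwm⟩ := hT.exists_mem_unitBall_apply_ge hα hα1 hαpos hβ hβ1 hς hΛ m
    (δ := (1 - e) / 2) (by linarith) n
  have := abs_le.1 (h w hw)
  rw [hwN n le_rfl] at this
  linarith [this.2]

lemma exists_coordApprox_family (hT : IsLinearIsometry α β T) (hβ : Summable fun i => |β i|)
    (hβ1 : ∑' i, |β i| = 1) :
    ∃ (m : ℕ → ℕ) (s e : ℕ → ℝ), (∀ n, |s n| = 1) ∧ (∀ n, e n < 1 / 3) ∧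
      Tendsto e atTop (𝓝 0) ∧ {n | |β n| < 1 / 4}.InjOn m ∧
      ∀ n ∈ {n | |β n| < 1 / 4}, CoordApprox β T (m n) n (s n) (e n) := by
  set e : ℕ → ℝ := fun n => ((n : ℝ) + 4)⁻¹
  have he1 : ∀ n, e n < 1 / 3 := fun n => by
    rw [inv_lt_comm₀ (by positivity) (by norm_num)]
    norm_num
    linarith [(n.cast_nonneg : (0 : ℝ) ≤ n)]
  have he : Tendsto e atTop (𝓝 0) :=
    tendsto_inv_atTop_zero.comp (tendsto_atTop_add_const_right _ 4 tendsto_natCast_atTop_atTop)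
  have : ∀ n, ∃ m s, |s| = 1 ∧ (|β n| < 1 / 4 → CoordApprox β T m n s (e n)) := fun n => by
    by_cases hn : |β n| < 1 / 4
    · obtain ⟨x, hx⟩ := exists_isPeak hβ hβ1 hn
      obtain ⟨m, s, hs, h⟩ := hT.exists_coordApprox hβ hx (by positivity : 0 < e n)
      exact ⟨m, s, hs, fun _ => h⟩
    · exact ⟨0, 1, abs_one, fun h => absurd h hn⟩
  choose m s hs happrox using this
  refine ⟨m, s, e, hs, he1, he, fun a ha b hb hab => ?_, happrox⟩
  obtain ⟨x, hx⟩ := exists_isPeak hβ hβ1 ha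
  exact ((happrox a ha).eq_of_isPeak (hab ▸ happrox b hb) hx (hs a) (hs b)
    (by linarith [he1 a, he1 b])).symm

lemma tsum_eq_of_infinite_fiber (hT : IsLinearIsometry α β T) {G : Set ℕ} {m : ℕ → ℕ}
    {s e : ℕ → ℝ} (he : Tendsto e atTop (𝓝 0)) (hinj : G.InjOn m)
    (happrox : ∀ n ∈ G, CoordApprox β T (m n) n (s n) (e n)) {ϑ : ℝ}
    (hϑ : {n ∈ G | s n = ϑ}.Infinite) (y : ℕ → ℝ) (hy : y ∈ UnitBall β) :
    ∑' i, α i * T y i = ϑ * ∑' i, β i * y i :=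
  hT.tsum_eq_of_coordApprox hϑ (hinj.mono fun _ hn => hn.1) he
    (fun n hn => hn.2 ▸ happrox n hn.1) hy

lemma exists_tsum_eq_mul (hT : IsLinearIsometry α β T) {G : Set ℕ} (hG : G.Infinite)
    {m : ℕ → ℕ} {s e : ℕ → ℝ} (hs : ∀ n, |s n| = 1) (he : Tendsto e atTop (𝓝 0))
    (hinj : G.InjOn m) (happrox : ∀ n ∈ G, CoordApprox β T (m n) n (s n) (e n)) :
    ∃ ς, |ς| = 1 ∧ ∀ y ∈ UnitBall β, ∑' i, α i * T y i = ς * ∑' i, β i * y i := by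
  have hsplit : G ⊆ {n ∈ G | s n = 1} ∪ {n ∈ G | s n = -1} := fun n hn =>
    ((abs_eq zero_le_one).1 (hs n)).imp (⟨hn, ·⟩) (⟨hn, ·⟩)
  rcases Set.infinite_union.1 (hG.mono hsplit) with h | h
  exacts [⟨1, abs_one, hT.tsum_eq_of_infinite_fiber he hinj happrox h⟩,
    ⟨-1, by simp, hT.tsum_eq_of_infinite_fiber he hinj happrox h⟩]

end IsLinearIsometry

/-- if `‖α‖₁ = 1`, `α(n) > 0` for all `n`, and `W_α` contains a subspace
isometric to `W_β` with `‖β‖₁ = 1`, then `{n | β n < 0}` is finite and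
`{n | β n = 0}` is empty. -/
theorem stmt10 (α β : ℕ → ℝ)
    (hα : Summable fun i => |α i|) (hα1 : ∑' i, |α i| = 1) (hαpos : ∀ n, 0 < α n)
    (hβ : Summable fun i => |β i|) (hβ1 : ∑' i, |β i| = 1)
    (hemb : ∃ T : (ℕ → ℝ) → (ℕ → ℝ),
      (∀ x, MemW β x → MemW α (T x) ∧ supNorm (T x) = supNorm x) ∧
      (∀ x y, MemW β x → MemW β y → T (x + y) = T x + T y) ∧
      (∀ (a : ℝ) (x : ℕ → ℝ), MemW β x → T (a • x) = a • T x)) :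
    {n | β n < 0}.Finite ∧ {n | β n = 0} = ∅ := by
  obtain ⟨T, hT1, hT2, hT3⟩ := hemb
  have hT : IsLinearIsometry α β T :=
    ⟨fun x hx => (hT1 x hx).1, fun x hx => (hT1 x hx).2, hT2, hT3⟩
  simp only [abs_of_pos (hαpos _)] at hα hα1
  set G := {n | |β n| < 1 / 4}
  have hGc : Gᶜ.Finite := eventually_cofinite.1 <| Nat.cofinite_eq_atTop ▸
    hβ.tendsto_atTop_zero.eventually (gt_mem_nhds (by norm_num : (0 : ℝ) < 1 / 4))
  obtain ⟨m, s, e, hs, he1, he, hinj, happrox⟩ := hT.exists_coordApprox_family hβ hβ1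
  obtain ⟨ς, hς, hΛ⟩ :=
    hT.exists_tsum_eq_mul (Set.infinite_of_finite_compl hGc) hs he hinj happrox
  have hsign : ∀ n ∈ G, 0 < s n * (ς * SignType.sign (β n)) := fun n hn =>
    hT.mul_mul_sign_pos hα hα1 hαpos hβ hβ1 hς hΛ (happrox n hn) (by linarith [he1 n])
  refine ⟨?_, Set.eq_empty_of_forall_notMem fun n (hn : β n = 0) => ?_⟩
  · by_contra hneg
    have hneg' : {n ∈ G | s n = -ς}.Infinite := (Set.Infinite.sdiff hneg hGc).mono
      fun n (hn : β n < 0 ∧ n ∉ Gᶜ) => ⟨not_not.1 hn.2, eq_of_abs_eq_one_of_mul_pos (hs n)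
        (by simpa using hς) (by simpa [sign_neg hn.1] using hsign n (not_not.1 hn.2))⟩
    have hςς : ς = -ς := eq_of_forall_mul_tsum_eq hβ hβ1 fun y hy =>
      (hΛ y hy).symm.trans (hT.tsum_eq_of_infinite_fiber he hinj happrox hneg' y hy)
    have : ς = 0 := by linarith
    simp [this] at hς
  · simpa [hn] using hsign n (by simp [G, hn])
end
end
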